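/- arXiv:2001.07201 — 4 statements merged into one kernel-verified Lean document; each statement's English description precedes it below -/
import Mathlib

section
/- Let A, B, C, D ∈ ℝ² with no three collinear. Let h be a conic through A, B, C, D with a center O, let u ∈ ℝ² be nonzero (the direction of a diameter k of h through O), let v ∈ ℝ² be nonzero with B_h(u, v) = 0, let M = O + s·u for some s ∈ ℝ, and let ℓ = {M + t·v : t ∈ ℝ} be a line containing none of A, B, C, D. Suppose some conic G through A, B, C, D, given by a polynomial not proportional to that of h, meets ℓ in exactly two points P ≠ Q with M = (P + Q)/2. Then every conic through A, B, C, D meets ℓ either in the empty set, or exactly in {M}, or exactly in a pair of distinct points whose midpoint is M. -/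
/-- A conic (possibly degenerate) in the affine plane `ℝ × ℝ`, given by the six
coefficients of a polynomial `a·x² + b·x·y + c·y² + d·x + e·y + g`. -/
structure Conic where
  a : ℝ
  b : ℝ
  c : ℝ
  d : ℝ
  e : ℝ
  g : ℝ

/-- Evaluation of the defining polynomial of a conic at a point of `ℝ × ℝ`. -/
def Conic.eval (f : Conic) (p : ℝ × ℝ) : ℝ :=
  f.a * p.1 ^ 2 + f.b * p.1 * p.2 + f.c * p.2 ^ 2 + f.d * p.1 + f.e * p.2 + f.g

/-- The defining polynomial is nonzero. -/
def Conic.Nonzero (f : Conic) : Prop :=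
  ¬ (f.a = 0 ∧ f.b = 0 ∧ f.c = 0 ∧ f.d = 0 ∧ f.e = 0 ∧ f.g = 0)

/-- The conic passes through the four points `A`, `B`, `C`, `D`. -/
def Conic.Through (f : Conic) (A B C D : ℝ × ℝ) : Prop :=
  f.eval A = 0 ∧ f.eval B = 0 ∧ f.eval C = 0 ∧ f.eval D = 0

/-- No three of the four points `A`, `B`, `C`, `D` are collinear. -/
def NoThreeCollinear (A B C D : ℝ × ℝ) : Prop :=
  ¬ Collinear ℝ ({A, B, C} : Set (ℝ × ℝ)) ∧ ¬ Collinear ℝ ({A, B, D} : Set (ℝ × ℝ)) ∧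
  ¬ Collinear ℝ ({A, C, D} : Set (ℝ × ℝ)) ∧ ¬ Collinear ℝ ({B, C, D} : Set (ℝ × ℝ))

/-- The line through `M` with direction `u`. -/
def parmLine (M u : ℝ × ℝ) : Set (ℝ × ℝ) :=
  {p | ∃ t : ℝ, p = M + t • u}

/-- The polynomial of `f` is proportional to that of `h`. -/
def Conic.PropTo (f h : Conic) : Prop :=
  ∃ k : ℝ, f.a = k * h.a ∧ f.b = k * h.b ∧ f.c = k * h.c ∧
    f.d = k * h.d ∧ f.e = k * h.e ∧ f.g = k * h.g

/-- The polar bilinear form of the quadratic part of `f`: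
`B_f(u, w) = a·u₁·w₁ + (b/2)·(u₁·w₂ + u₂·w₁) + c·u₂·w₂`. -/
noncomputable def Conic.polarForm (f : Conic) (u w : ℝ × ℝ) : ℝ :=
  f.a * u.1 * w.1 + (f.b / 2) * (u.1 * w.2 + u.2 * w.1) + f.c * u.2 * w.2

/-- `O` is a center of the conic `f`. -/
def Conic.IsCenter (f : Conic) (O : ℝ × ℝ) : Prop :=
  ∀ w : ℝ × ℝ, f.eval (O + w) = f.eval (O - w)

/-!
The conics through four points in general position form a pencil: a line pair through three of
the points misses the fourth, so the four incidence conditions are independent and the conics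
through `A, B, C, D` form a plane spanned by `h` and `G`. On the line `M + t v`, the restriction
of `h` is even in `t` because `O` is a center and `v` is conjugate to `u`, and that of `G` is even
because its two roots are symmetric about `M`; hence every `f` of the pencil restricts to
`q t² + γ`. A conic containing the line would consist of that line and a second one through the
non-collinear `A, B, C`, so `(q, γ) ≠ 0`, and `q t² + γ` has no root, the root `0`, or roots `±r`.
-/

/-- Twice the signed area of the triangle `p q r`. -/
def cross (p q r : ℝ × ℝ) : ℝ :=
  (q.1 - p.1) * (r.2 - p.2) - (q.2 - p.2) * (r.1 - p.1)

@[simp]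
lemma cross_self_left (p q : ℝ × ℝ) : cross p q p = 0 := by
  simp [cross]

@[simp]
lemma cross_self_right (p q : ℝ × ℝ) : cross p q q = 0 := by
  simp only [cross]; ring

lemma sq_fst_add_sq_snd_pos {v : ℝ × ℝ} (hv : v ≠ 0) : 0 < v.1 ^ 2 + v.2 ^ 2 := by
  have : v.1 ≠ 0 ∨ v.2 ≠ 0 := by
    contrapose! hv
    exact Prod.ext hv.1 hv.2
  rcases this with h | h <;> positivity

lemma collinear_of_cross_eq_zero {p q r : ℝ × ℝ} (h : cross p q r = 0) :
    Collinear ℝ ({p, q, r} : Set (ℝ × ℝ)) := by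
  by_cases hpq : p = q
  · subst hpq
    simpa using collinear_pair ℝ p r
  have hn := (sq_fst_add_sq_snd_pos (sub_ne_zero.2 (Ne.symm hpq))).ne'
  simp only [Prod.fst_sub, Prod.snd_sub] at hn
  have hr : AffineMap.lineMap p q (((r.1 - p.1) * (q.1 - p.1) + (r.2 - p.2) * (q.2 - p.2)) /
      ((q.1 - p.1) ^ 2 + (q.2 - p.2) ^ 2)) = r := by
    simp only [cross] at h
    rw [AffineMap.lineMap_apply_module']
    ext <;> simp only [Prod.fst_add, Prod.snd_add, Prod.smul_fst, Prod.smul_snd, Prod.fst_sub,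
      Prod.snd_sub, smul_eq_mul] <;> field_simp
    · linear_combination (q.2 - p.2) * h
    · linear_combination -(q.1 - p.1) * h
  have := collinear_insert_of_mem_affineSpan_pair
    (hr ▸ AffineMap.lineMap_mem_affineSpan_pair _ p q)
  rwa [Set.insert_comm, Set.pair_comm] at this

lemma eq_zero_of_not_collinear {A B C : ℝ × ℝ} (hABC : ¬ Collinear ℝ ({A, B, C} : Set (ℝ × ℝ)))
    {α β γ : ℝ} (hA : α * A.1 + β * A.2 + γ = 0) (hB : α * B.1 + β * B.2 + γ = 0)
    (hC : α * C.1 + β * C.2 + γ = 0) (X : ℝ × ℝ) : α * X.1 + β * X.2 + γ = 0 := by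
  have hcross : cross A B C ≠ 0 := mt collinear_of_cross_eq_zero hABC
  have hα : α * cross A B C = 0 := by
    simp only [cross]; linear_combination (C.2 - A.2) * (hB - hA) - (B.2 - A.2) * (hC - hA)
  have hβ : β * cross A B C = 0 := by
    simp only [cross]; linear_combination (B.1 - A.1) * (hC - hA) - (C.1 - A.1) * (hB - hA)
  obtain rfl := (mul_eq_zero.1 hα).resolve_right hcross
  obtain rfl := (mul_eq_zero.1 hβ).resolve_right hcross
  linarith

lemma mem_parmLine_of_cross_eq_zero {M v X : ℝ × ℝ} (hv : v ≠ 0) (h : cross M (M + v) X = 0) :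
    X ∈ parmLine M v := by
  have hn := (sq_fst_add_sq_snd_pos hv).ne'
  refine ⟨((X.1 - M.1) * v.1 + (X.2 - M.2) * v.2) / (v.1 ^ 2 + v.2 ^ 2), ?_⟩
  simp only [cross, Prod.fst_add, Prod.snd_add, add_sub_cancel_left] at h
  ext <;> simp only [Prod.fst_add, Prod.snd_add, Prod.smul_fst, Prod.smul_snd, smul_eq_mul] <;>
    field_simp
  · linear_combination -v.2 * h
  · linear_combination v.1 * h

namespace Conic

variable (f : Conic)

lemma Nonzero.exists_eval_ne_zero {f : Conic} (hf : f.Nonzero) : ∃ p, f.eval p ≠ 0 := by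
  by_contra! h
  apply hf
  have h00 := h (0, 0)
  have h10 := h (1, 0)
  have hm0 := h (-1, 0)
  have h01 := h (0, 1)
  have h0m := h (0, -1)
  have h11 := h (1, 1)
  simp only [eval] at h00 h10 hm0 h01 h0m h11
  norm_num at h00 h10 hm0 h01 h0m h11
  refine ⟨?_, ?_, ?_, ?_, ?_, ?_⟩ <;> linarith

def SymmetricOnLine (M v : ℝ × ℝ) : Prop :=
  ∀ t : ℝ, f.eval (M + t • v) = f.eval (M - t • v)

lemma eval_add_smul_sub_eval_sub_smul (M v : ℝ × ℝ) (t : ℝ) :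
    f.eval (M + t • v) - f.eval (M - t • v) = t * (f.eval (M + v) - f.eval (M - v)) := by
  simp only [eval, Prod.fst_add, Prod.snd_add, Prod.fst_sub, Prod.snd_sub, Prod.smul_fst,
    Prod.smul_snd, smul_eq_mul]
  ring

lemma symmetricOnLine_of_eval_eq_zero {M v : ℝ × ℝ} {t : ℝ} (ht : t ≠ 0)
    (hpos : f.eval (M + t • v) = 0) (hneg : f.eval (M - t • v) = 0) : f.SymmetricOnLine M v := by
  have h1 : f.eval (M + v) - f.eval (M - v) = 0 := by
    have := f.eval_add_smul_sub_eval_sub_smul M v t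
    rw [hpos, hneg, sub_zero, eq_comm] at this
    exact (mul_eq_zero.1 this).resolve_left ht
  intro s
  linear_combination f.eval_add_smul_sub_eval_sub_smul M v s + s * h1

lemma symmetricOnLine_of_zeroSet_eq_pair {f : Conic} {M v P Q : ℝ × ℝ} (hv : v ≠ 0)
    (hPQ : P ≠ Q) (hfl : {p ∈ parmLine M v | f.eval p = 0} = {P, Q})
    (hmid : M = midpoint ℝ P Q) : f.SymmetricOnLine M v := by
  obtain ⟨⟨t, rfl⟩, hP⟩ : P ∈ {p ∈ parmLine M v | f.eval p = 0} := hfl ▸ Set.mem_insert _ _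
  obtain ⟨⟨t', rfl⟩, hQ⟩ : Q ∈ {p ∈ parmLine M v | f.eval p = 0} :=
    hfl ▸ Set.mem_insert_of_mem _ rfl
  have ht' : t' = -t := by
    have := midpoint_add_self ℝ (M + t • v) (M + t' • v)
    rw [← hmid] at this
    have : (t + t') • v = 0 := by linear_combination (norm := module) -this
    linarith [(smul_eq_zero.1 this).resolve_right hv]
  subst ht'
  refine f.symmetricOnLine_of_eval_eq_zero (fun ht => hPQ ?_) hP
    (by rwa [neg_smul, ← sub_eq_add_neg] at hQ)
  simp [ht]

lemma IsCenter.symmetricOnLine {f : Conic} {O : ℝ × ℝ} (hO : f.IsCenter O) {u v : ℝ × ℝ}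
    (hconj : f.polarForm u v = 0) (s : ℝ) : f.SymmetricOnLine (O + s • u) v := by
  intro t
  have hOv := hO (t • v)
  simp only [polarForm] at hconj
  simp only [eval, Prod.fst_add, Prod.snd_add, Prod.fst_sub, Prod.snd_sub, Prod.smul_fst,
    Prod.smul_snd, smul_eq_mul] at hOv ⊢
  linear_combination hOv + 4 * s * t * hconj

lemma SymmetricOnLine.eval_add_smul {f : Conic} {M v : ℝ × ℝ} (hf : f.SymmetricOnLine M v)
    (t : ℝ) : f.eval (M + t • v) = (f.eval (M + v) - f.eval M) * t ^ 2 + f.eval M := by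
  have h1 := hf 1
  simp only [one_smul] at h1
  simp only [eval, Prod.fst_add, Prod.snd_add, Prod.fst_sub, Prod.snd_sub, Prod.smul_fst,
    Prod.smul_snd, smul_eq_mul] at h1 ⊢
  linear_combination (t - t ^ 2) / 2 * h1

lemma exists_factor_of_forall_eval_line_eq_zero {M v : ℝ × ℝ}
    (hline : ∀ t : ℝ, f.eval (M + t • v) = 0) :
    ∃ α β γ : ℝ, ∀ X : ℝ × ℝ,
      (v.1 ^ 2 + v.2 ^ 2) ^ 2 * f.eval X = cross M (M + v) X * (α * X.1 + β * X.2 + γ) := by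
  have h0 := hline 0
  have h1 := hline 1
  have hm := hline (-1)
  set w : ℝ × ℝ := (-v.2, v.1)
  set b := 2 * f.polarForm v w
  set c := f.polarForm w w
  set e := 2 * f.polarForm M w + f.d * w.1 + f.e * w.2
  refine ⟨b * v.1 - c * v.2, b * v.2 + c * v.1,
    -b * (v.1 * M.1 + v.2 * M.2) + c * (v.2 * M.1 - v.1 * M.2) + e * (v.1 ^ 2 + v.2 ^ 2),
    fun X => ?_⟩
  set T := (X.1 - M.1) * v.1 + (X.2 - M.2) * v.2
  -- `‖v‖² (X - M) = T v + L w` with `L = cross M (M + v) X`; expanding `f` in this frame, the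
  -- coefficients of `T²`, `T`, `1` are fixed by the values of `f` at `M`, `M ± v`.
  simp only [b, c, e, w, polarForm, cross, eval, Prod.fst_add, Prod.snd_add, Prod.smul_fst,
    Prod.smul_snd, smul_eq_mul] at h0 h1 hm ⊢
  linear_combination (T ^ 2 + T * (v.1 ^ 2 + v.2 ^ 2)) / 2 * h1 +
    (T ^ 2 - T * (v.1 ^ 2 + v.2 ^ 2)) / 2 * hm + ((v.1 ^ 2 + v.2 ^ 2) ^ 2 - T ^ 2) * h0

lemma not_forall_eval_line_eq_zero {f : Conic} (hf : f.Nonzero) {A B C M v : ℝ × ℝ}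
    (hv : v ≠ 0) (hABC : ¬ Collinear ℝ ({A, B, C} : Set (ℝ × ℝ)))
    (hA : f.eval A = 0) (hB : f.eval B = 0) (hC : f.eval C = 0)
    (hAl : A ∉ parmLine M v) (hBl : B ∉ parmLine M v) (hCl : C ∉ parmLine M v) :
    ¬ ∀ t : ℝ, f.eval (M + t • v) = 0 := by
  intro hline
  obtain ⟨α, β, γ, hfactor⟩ := f.exists_factor_of_forall_eval_line_eq_zero hline
  have hroot : ∀ X, f.eval X = 0 → X ∉ parmLine M v → α * X.1 + β * X.2 + γ = 0 := by
    intro X hX hXl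
    have := hfactor X
    rw [hX, mul_zero, eq_comm] at this
    exact (mul_eq_zero.1 this).resolve_left (mt (mem_parmLine_of_cross_eq_zero hv) hXl)
  obtain ⟨X, hX⟩ := hf.exists_eval_ne_zero
  have := hfactor X
  rw [eq_zero_of_not_collinear hABC (hroot A hA hAl) (hroot B hB hBl) (hroot C hC hCl) X,
    mul_zero] at this
  exact hX ((mul_eq_zero.1 this).resolve_left (pow_ne_zero 2 (sq_fst_add_sq_snd_pos hv).ne'))

def coeffs : Fin 6 → ℝ := ![f.a, f.b, f.c, f.d, f.e, f.g]

lemma nonzero_iff_coeffs_ne_zero : f.Nonzero ↔ f.coeffs ≠ 0 := by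
  simp [Nonzero, coeffs, funext_iff, Fin.forall_fin_succ]

lemma propTo_iff_exists_smul_coeffs (h : Conic) :
    f.PropTo h ↔ ∃ k : ℝ, k • h.coeffs = f.coeffs := by
  simp [PropTo, coeffs, funext_iff, Fin.forall_fin_succ, eq_comm]

def linePair (p q r s : ℝ × ℝ) : Conic where
  a := (p.2 - q.2) * (r.2 - s.2)
  b := (p.2 - q.2) * (s.1 - r.1) + (q.1 - p.1) * (r.2 - s.2)
  c := (q.1 - p.1) * (s.1 - r.1)
  d := (p.2 - q.2) * (r.1 * s.2 - s.1 * r.2) + (p.1 * q.2 - q.1 * p.2) * (r.2 - s.2)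
  e := (q.1 - p.1) * (r.1 * s.2 - s.1 * r.2) + (p.1 * q.2 - q.1 * p.2) * (s.1 - r.1)
  g := (p.1 * q.2 - q.1 * p.2) * (r.1 * s.2 - s.1 * r.2)

lemma eval_linePair (p q r s x : ℝ × ℝ) :
    (linePair p q r s).eval x = cross p q x * cross r s x := by
  simp only [eval, linePair, cross]
  ring

lemma eval_linePair_ne_zero {p q r s : ℝ × ℝ} (hr : ¬ Collinear ℝ ({p, q, r} : Set (ℝ × ℝ)))
    (hs : ¬ Collinear ℝ ({p, q, s} : Set (ℝ × ℝ))) : (linePair q r q s).eval p ≠ 0 := by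
  rw [eval_linePair]
  refine mul_ne_zero (fun h => hr ?_) (fun h => hs ?_) <;>
  · have := collinear_of_cross_eq_zero h
    rwa [Set.pair_comm, Set.insert_comm] at this

end Conic

def monomials (p : ℝ × ℝ) : Fin 6 → ℝ := ![p.1 ^ 2, p.1 * p.2, p.2 ^ 2, p.1, p.2, 1]

lemma Conic.eval_eq_dotProduct (f : Conic) (p : ℝ × ℝ) : f.eval p = monomials p ⬝ᵥ f.coeffs := by
  simp [eval, monomials, coeffs, dotProduct, Fin.sum_univ_succ]
  ring

def evalMap {ι : Type*} [Fintype ι] (p : ι → ℝ × ℝ) : (Fin 6 → ℝ) →ₗ[ℝ] (ι → ℝ) :=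
  (Matrix.of fun i => monomials (p i)).mulVecLin

lemma evalMap_coeffs {ι : Type*} [Fintype ι] (p : ι → ℝ × ℝ) (f : Conic) :
    evalMap p f.coeffs = fun i => f.eval (p i) := by
  ext i
  simp [evalMap, Matrix.mulVec, Conic.eval_eq_dotProduct]

lemma evalMap_surjective {ι : Type*} [Fintype ι] [DecidableEq ι] {p : ι → ℝ × ℝ}
    (hsep : ∀ i, ∃ f : Conic, f.eval (p i) ≠ 0 ∧ ∀ j ≠ i, f.eval (p j) = 0) :
    Function.Surjective (evalMap p) := by
  rw [← LinearMap.range_eq_top, eq_top_iff, ← (Pi.basisFun ℝ ι).span_eq, Submodule.span_le]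
  rintro _ ⟨i, rfl⟩
  obtain ⟨f, hfi, hfj⟩ := hsep i
  refine ⟨(f.eval (p i))⁻¹ • f.coeffs, ?_⟩
  ext j
  rw [map_smul, evalMap_coeffs, Pi.basisFun_apply, Pi.smul_apply, smul_eq_mul]
  by_cases hji : j = i
  · subst hji; simp [hfi]
  · simp [hfj j hji, hji]

lemma finrank_ker_evalMap_add_card {ι : Type*} [Fintype ι] [DecidableEq ι] {p : ι → ℝ × ℝ}
    (hsep : ∀ i, ∃ f : Conic, f.eval (p i) ≠ 0 ∧ ∀ j ≠ i, f.eval (p j) = 0) :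
    Module.finrank ℝ (LinearMap.ker (evalMap p)) + Fintype.card ι = 6 := by
  have := (evalMap p).finrank_range_add_finrank_ker
  rw [LinearMap.range_eq_top.2 (evalMap_surjective hsep), finrank_top] at this
  simpa [add_comm] using this

namespace NoThreeCollinear

lemma exists_separating_conic {A B C D : ℝ × ℝ} (hgen : NoThreeCollinear A B C D) (i : Fin 4) :
    ∃ f : Conic, f.eval (![A, B, C, D] i) ≠ 0 ∧ ∀ j ≠ i, f.eval (![A, B, C, D] j) = 0 := by
  obtain ⟨hABC, hABD, hACD, -⟩ := hgen
  fin_cases i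
  · refine ⟨.linePair B C B D, Conic.eval_linePair_ne_zero hABC hABD, ?_⟩
    intro j hj; fin_cases j <;> simp [Conic.eval_linePair] at hj ⊢
  · refine ⟨.linePair A C A D, Conic.eval_linePair_ne_zero ?_ ?_, ?_⟩
    · rwa [Set.insert_comm] at hABC
    · rwa [Set.insert_comm] at hABD
    intro j hj; fin_cases j <;> simp [Conic.eval_linePair] at hj ⊢
  · refine ⟨.linePair A B A D, Conic.eval_linePair_ne_zero ?_ ?_, ?_⟩
    · rwa [Set.pair_comm, Set.insert_comm] at hABC
    · rwa [Set.insert_comm] at hACD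
    intro j hj; fin_cases j <;> simp [Conic.eval_linePair] at hj ⊢
  · refine ⟨.linePair A B A C, Conic.eval_linePair_ne_zero ?_ ?_, ?_⟩
    · rwa [Set.pair_comm, Set.insert_comm] at hABD
    · rwa [Set.pair_comm, Set.insert_comm] at hACD
    intro j hj; fin_cases j <;> simp [Conic.eval_linePair] at hj ⊢

theorem exists_eval_eq_add {A B C D : ℝ × ℝ} (hgen : NoThreeCollinear A B C D) {h G f : Conic}
    (hh0 : h.Nonzero) (hh : h.Through A B C D) (hG : G.Through A B C D) (hGh : ¬ G.PropTo h)
    (hf : f.Through A B C D) : ∃ x y : ℝ, ∀ p, f.eval p = x * h.eval p + y * G.eval p := by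
  have hker : ∀ k : Conic, k.Through A B C D →
      k.coeffs ∈ LinearMap.ker (evalMap ![A, B, C, D]) := by
    rintro k ⟨hA, hB, hC, hD⟩
    rw [LinearMap.mem_ker, evalMap_coeffs]
    ext i
    fin_cases i <;> simpa
  have hind : LinearIndependent ℝ ![h.coeffs, G.coeffs] := by
    rw [LinearIndependent.pair_iff' ((h.nonzero_iff_coeffs_ne_zero).1 hh0)]
    exact fun k hk => hGh ((G.propTo_iff_exists_smul_coeffs h).2 ⟨k, hk⟩)
  have hspan : Submodule.span ℝ (Set.range ![h.coeffs, G.coeffs]) =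
      LinearMap.ker (evalMap ![A, B, C, D]) := by
    apply Submodule.eq_of_le_of_finrank_eq
    · rw [Submodule.span_le]
      rintro _ ⟨i, rfl⟩
      fin_cases i
      exacts [hker h hh, hker G hG]
    · have := finrank_ker_evalMap_add_card hgen.exists_separating_conic
      rw [finrank_span_eq_card hind]
      simp only [Fintype.card_fin] at this ⊢
      omega
  obtain ⟨c, hc⟩ := (Submodule.mem_span_range_iff_exists_fun ℝ).1 (hspan ▸ hker f hf)
  refine ⟨c 0, c 1, fun p => ?_⟩
  simp [Conic.eval_eq_dotProduct, ← hc, Fin.sum_univ_two, dotProduct_add, dotProduct_smul]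

end NoThreeCollinear

lemma setOf_mul_sq_add_eq_zero_trichotomy {q γ : ℝ} (h : q ≠ 0 ∨ γ ≠ 0) :
    {t : ℝ | q * t ^ 2 + γ = 0} = ∅ ∨ {t : ℝ | q * t ^ 2 + γ = 0} = {0} ∨
      ∃ r ≠ 0, {t : ℝ | q * t ^ 2 + γ = 0} = {r, -r} := by
  by_cases hroot : ∃ r, q * r ^ 2 + γ = 0
  · obtain ⟨r, hr⟩ := hroot
    have hq : q ≠ 0 := by
      rintro rfl
      simp_all
    have key : ∀ t, q * t ^ 2 + γ = 0 ↔ t = r ∨ t = -r := by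
      intro t
      have : q * t ^ 2 + γ = q * (t ^ 2 - r ^ 2) := by linear_combination hr
      rw [this, mul_eq_zero, or_iff_right hq, sub_eq_zero, sq_eq_sq_iff_eq_or_eq_neg]
    right
    by_cases hr0 : r = 0
    · left
      ext t
      simp [key, hr0]
    · right
      exact ⟨r, hr0, by ext t; simp [key]⟩
  · left
    ext t
    simpa using fun ht => hroot ⟨t, ht⟩

lemma Conic.SymmetricOnLine.zeroSet_trichotomy {f : Conic} {M v : ℝ × ℝ}
    (hf : f.SymmetricOnLine M v) (hv : v ≠ 0) (hne : ¬ ∀ t : ℝ, f.eval (M + t • v) = 0) :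
    {p ∈ parmLine M v | f.eval p = 0} = ∅ ∨ {p ∈ parmLine M v | f.eval p = 0} = {M} ∨
      ∃ X Y : ℝ × ℝ, X ≠ Y ∧ M = midpoint ℝ X Y ∧ {p ∈ parmLine M v | f.eval p = 0} = {X, Y} := by
  have himage : {p ∈ parmLine M v | f.eval p = 0} = (fun t : ℝ => M + t • v) ''
      {t | (f.eval (M + v) - f.eval M) * t ^ 2 + f.eval M = 0} := by
    ext p
    simp only [parmLine, Set.mem_ofPred_eq, Set.mem_image, ← hf.eval_add_smul]
    constructor
    · rintro ⟨⟨t, rfl⟩, ht⟩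
      exact ⟨t, ht, rfl⟩
    · rintro ⟨t, ht, rfl⟩
      exact ⟨⟨t, rfl⟩, ht⟩
  have hcoeff : f.eval (M + v) - f.eval M ≠ 0 ∨ f.eval M ≠ 0 := by
    contrapose! hne
    intro t
    rw [hf.eval_add_smul, hne.1, hne.2, zero_mul, add_zero]
  rw [himage]
  rcases setOf_mul_sq_add_eq_zero_trichotomy hcoeff with h | h | ⟨r, hr, h⟩ <;> rw [h]
  · exact Or.inl (Set.image_empty _)
  · exact Or.inr (Or.inl (by simp))
  refine Or.inr (Or.inr ⟨M + r • v, M + (-r) • v, fun heq => hr ?_, ?_, Set.image_pair _ _ _⟩)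
  · have := smul_left_injective ℝ hv (add_left_cancel heq)
    linarith
  · rw [midpoint_eq_smul_add, invOf_eq_inv]
    module

theorem volenec_butterfly_general
    (A B C D : ℝ × ℝ) (hgen : NoThreeCollinear A B C D)
    (h : Conic) (hh0 : h.Nonzero) (hh : h.Through A B C D)
    (O : ℝ × ℝ) (hO : h.IsCenter O)
    (u : ℝ × ℝ) (v : ℝ × ℝ) (hv : v ≠ 0)
    (hconj : h.polarForm u v = 0)
    (s : ℝ) (M : ℝ × ℝ) (hM : M = O + s • u)
    (hAl : A ∉ parmLine M v) (hBl : B ∉ parmLine M v)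
    (hCl : C ∉ parmLine M v)
    (G : Conic) (hG : G.Through A B C D)
    (hGh : ¬ G.PropTo h)
    (P Q : ℝ × ℝ) (hPQ : P ≠ Q)
    (hGl : {p ∈ parmLine M v | G.eval p = 0} = {P, Q})
    (hmid : M = midpoint ℝ P Q) :
    ∀ f : Conic, f.Nonzero → f.Through A B C D →
      {p ∈ parmLine M v | f.eval p = 0} = ∅ ∨
      {p ∈ parmLine M v | f.eval p = 0} = {M} ∨
      ∃ X Y : ℝ × ℝ, X ≠ Y ∧ M = midpoint ℝ X Y ∧
        {p ∈ parmLine M v | f.eval p = 0} = {X, Y} := by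
  intro f hf0 hf
  have hhsym : h.SymmetricOnLine M v := hM ▸ hO.symmetricOnLine hconj s
  have hGsym : G.SymmetricOnLine M v := G.symmetricOnLine_of_zeroSet_eq_pair hv hPQ hGl hmid
  obtain ⟨x, y, hfxy⟩ := hgen.exists_eval_eq_add hh0 hh hG hGh hf
  have hfsym : f.SymmetricOnLine M v := fun t => by rw [hfxy, hfxy, hhsym t, hGsym t]
  exact hfsym.zeroSet_trichotomy hv
    (Conic.not_forall_eval_line_eq_zero hf0 hv hgen.1 hf.1 hf.2.1 hf.2.2.1 hAl hBl hCl)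

/-- **Volenec's butterfly theorem for conics.** Let `h` be a conic through the
four base points with center `O`, let the line `ℓ` through `M = O + s·u` with
direction `v` be conjugate to the diameter of `h` through `O` with direction `u`
(i.e. `B_h(u, v) = 0`). If some other conic through the four base points meets
`ℓ` in exactly two points with midpoint `M`, then every conic through the four
base points meets `ℓ` either not at all, or exactly at `M`, or exactly in a pair
of distinct points whose midpoint is `M`. -/
theorem volenec_butterfly
    (A B C D : ℝ × ℝ) (hgen : NoThreeCollinear A B C D)
    (h : Conic) (hh0 : h.Nonzero) (hh : h.Through A B C D)
    (O : ℝ × ℝ) (hO : h.IsCenter O)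
    (u : ℝ × ℝ) (hu : u ≠ 0) (v : ℝ × ℝ) (hv : v ≠ 0)
    (hconj : h.polarForm u v = 0)
    (s : ℝ) (M : ℝ × ℝ) (hM : M = O + s • u)
    (hAl : A ∉ parmLine M v) (hBl : B ∉ parmLine M v)
    (hCl : C ∉ parmLine M v) (hDl : D ∉ parmLine M v)
    (G : Conic) (hG0 : G.Nonzero) (hG : G.Through A B C D)
    (hGh : ¬ G.PropTo h)
    (P Q : ℝ × ℝ) (hPQ : P ≠ Q)
    (hGl : {p ∈ parmLine M v | G.eval p = 0} = {P, Q})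
    (hmid : M = midpoint ℝ P Q) :
    ∀ f : Conic, f.Nonzero → f.Through A B C D →
      {p ∈ parmLine M v | f.eval p = 0} = ∅ ∨
      {p ∈ parmLine M v | f.eval p = 0} = {M} ∨
      ∃ X Y : ℝ × ℝ, X ≠ Y ∧ M = midpoint ℝ X Y ∧
        {p ∈ parmLine M v | f.eval p = 0} = {X, Y} :=
  volenec_butterfly_general A B C D hgen h hh0 hh O hO u v hv hconj s M hM hAl hBl hCl G hG hGh P Q
    hPQ hGl hmid
end

section
/- Let A, B, C, D ∈ ℝ² with no three collinear, and let M ∈ ℝ² with M ∉ {A, B, C, D} be a center of some conic h through A, B, C, D, i.e., f_h(M + w) = f_h(M − w) for all w ∈ ℝ². Then there exists a nonzero vector v ∈ ℝ² such that for every conic f through A, B, C, D whose zero set does not contain the line ℓ = {M + t·v : t ∈ ℝ}, the set {t ∈ ℝ : f(M + t·v) = 0} is invariant under t ↦ −t. -/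
def lform (P Q X : ℝ × ℝ) : ℝ :=
  (Q.2 - P.2) * (X.1 - P.1) - (Q.1 - P.1) * (X.2 - P.2)

lemma lform_self (P Q : ℝ × ℝ) : lform P Q P = 0 := by simp [lform]

lemma lform_snd (P Q : ℝ × ℝ) : lform P Q Q = 0 := by simp [lform]; ring

lemma collinear_of_lform {P Q X : ℝ × ℝ} (h : lform P Q X = 0) :
    Collinear ℝ ({P, Q, X} : Set (ℝ × ℝ)) := by
  rw [collinear_iff_of_mem (Set.mem_insert P {Q, X})]
  by_cases hPQ : Q = P
  · refine ⟨X - P, ?_⟩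
    intro p hp
    rcases hp with rfl | rfl | rfl
    · exact ⟨0, by simp⟩
    · exact ⟨0, by simp [hPQ]⟩
    · exact ⟨1, by simp⟩
  · refine ⟨Q - P, ?_⟩
    intro p hp
    rcases hp with rfl | rfl | hpX
    · exact ⟨0, by simp⟩
    · exact ⟨1, by simp⟩
    · rw [Set.mem_singleton_iff] at hpX
      subst hpX
      simp only [lform] at h
      by_cases hq1 : Q.1 - P.1 = 0
      · have hq2 : Q.2 - P.2 ≠ 0 := by
          intro h2; apply hPQ; apply Prod.ext <;> linarith
        refine ⟨(p.2 - P.2) / (Q.2 - P.2), ?_⟩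
        have hx1 : p.1 - P.1 = 0 := by
          have : (Q.2 - P.2) * (p.1 - P.1) = 0 := by linear_combination h + (p.2 - P.2) * hq1
          rcases mul_eq_zero.1 this with h' | h'
          · exact absurd h' hq2
          · exact h'
        show p = _ + _
        apply Prod.ext <;> simp [Prod.smul_fst, Prod.smul_snd, smul_eq_mul] <;> field_simp <;> nlinarith [hx1, hq1]
      · refine ⟨(p.1 - P.1) / (Q.1 - P.1), ?_⟩
        show p = _ + _
        apply Prod.ext <;> simp [Prod.smul_fst, Prod.smul_snd, smul_eq_mul] <;> field_simp <;> nlinarith [h]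


def evalVec (c : Fin 6 → ℝ) (P : ℝ × ℝ) : ℝ :=
  c 0 * P.1 ^ 2 + c 1 * P.1 * P.2 + c 2 * P.2 ^ 2 + c 3 * P.1 + c 4 * P.2 + c 5

lemma evalVec_add (c c' : Fin 6 → ℝ) (P : ℝ × ℝ) :
    evalVec (c + c') P = evalVec c P + evalVec c' P := by
  simp [evalVec]; ring

lemma evalVec_smul (r : ℝ) (c : Fin 6 → ℝ) (P : ℝ × ℝ) :
    evalVec (r • c) P = r * evalVec c P := by
  simp [evalVec]; ring

/-- coefficient vector of the product of the lines `PQ` and `RS`. -/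
def lineConic (P Q R S : ℝ × ℝ) : Fin 6 → ℝ :=
  ![(Q.2 - P.2) * (S.2 - R.2),
    (Q.2 - P.2) * (-(S.1 - R.1)) + (-(Q.1 - P.1)) * (S.2 - R.2),
    (Q.1 - P.1) * (S.1 - R.1),
    (Q.2 - P.2) * (-((S.2 - R.2) * R.1 - (S.1 - R.1) * R.2)) +
      (-((Q.2 - P.2) * P.1 - (Q.1 - P.1) * P.2)) * (S.2 - R.2),
    (-(Q.1 - P.1)) * (-((S.2 - R.2) * R.1 - (S.1 - R.1) * R.2)) +
      (-((Q.2 - P.2) * P.1 - (Q.1 - P.1) * P.2)) * (-(S.1 - R.1)),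
    (-((Q.2 - P.2) * P.1 - (Q.1 - P.1) * P.2)) * (-((S.2 - R.2) * R.1 - (S.1 - R.1) * R.2))]

lemma evalVec_vec (a0 a1 a2 a3 a4 a5 : ℝ) (P : ℝ × ℝ) :
    evalVec ![a0, a1, a2, a3, a4, a5] P
      = a0 * P.1 ^ 2 + a1 * P.1 * P.2 + a2 * P.2 ^ 2 + a3 * P.1 + a4 * P.2 + a5 := rfl

lemma evalVec_lineConic (P Q R S X : ℝ × ℝ) :
    evalVec (lineConic P Q R S) X = lform P Q X * lform R S X := by
  rw [lineConic, evalVec_vec, lform, lform]; ring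

/-- The evaluation map at four points. -/
def Emap (A B C D : ℝ × ℝ) : (Fin 6 → ℝ) →ₗ[ℝ] (Fin 4 → ℝ) where
  toFun c := ![evalVec c A, evalVec c B, evalVec c C, evalVec c D]
  map_add' c c' := by
    funext i; fin_cases i <;> simp [evalVec_add]
  map_smul' r c := by
    funext i; fin_cases i <;> simp [evalVec_smul]


lemma lform_ne_zero {P Q X : ℝ × ℝ} (h : ¬ Collinear ℝ ({P, Q, X} : Set (ℝ × ℝ))) :
    lform P Q X ≠ 0 := fun h0 => h (collinear_of_lform h0)

lemma Emap_apply (A B C D : ℝ × ℝ) (c : Fin 6 → ℝ) :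
    Emap A B C D c = ![evalVec c A, evalVec c B, evalVec c C, evalVec c D] := rfl

lemma set_perm {P Q X : ℝ × ℝ} : ({P, Q, X} : Set (ℝ × ℝ)) = {X, P, Q} := by
  ext y; simp only [Set.mem_insert_iff, Set.mem_singleton_iff]; tauto

lemma set_swap {P Q X : ℝ × ℝ} : ({P, Q, X} : Set (ℝ × ℝ)) = {P, X, Q} := by
  ext y; simp only [Set.mem_insert_iff, Set.mem_singleton_iff]; tauto

lemma Emap_surjective {A B C D : ℝ × ℝ}
    (h1 : ¬ Collinear ℝ ({A, B, C} : Set (ℝ × ℝ)))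
    (h2 : ¬ Collinear ℝ ({A, B, D} : Set (ℝ × ℝ)))
    (h3 : ¬ Collinear ℝ ({A, C, D} : Set (ℝ × ℝ))) :
    Function.Surjective (Emap A B C D) := by
  have nBCA : lform B C A ≠ 0 := lform_ne_zero (by rw [set_perm]; exact h1)
  have nBDA : lform B D A ≠ 0 := lform_ne_zero (by rw [set_perm]; exact h2)
  have nACB : lform A C B ≠ 0 := lform_ne_zero (by rw [set_swap]; exact h1)
  have nADB : lform A D B ≠ 0 := lform_ne_zero (by rw [set_swap]; exact h2)
  have nABC : lform A B C ≠ 0 := lform_ne_zero h1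
  have nADC : lform A D C ≠ 0 := lform_ne_zero (by rw [set_swap]; exact h3)
  have nABD : lform A B D ≠ 0 := lform_ne_zero h2
  have nACD : lform A C D ≠ 0 := lform_ne_zero h3
  set cA : Fin 6 → ℝ := (lform B C A * lform B D A)⁻¹ • lineConic B C B D with hcA
  set cB : Fin 6 → ℝ := (lform A C B * lform A D B)⁻¹ • lineConic A C A D with hcB
  set cC : Fin 6 → ℝ := (lform A B C * lform A D C)⁻¹ • lineConic A B A D with hcC
  set cD : Fin 6 → ℝ := (lform A B D * lform A C D)⁻¹ • lineConic A B A C with hcD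
  intro y
  refine ⟨y 0 • cA + y 1 • cB + y 2 • cC + y 3 • cD, ?_⟩
  funext i
  fin_cases i <;>
    simp [Emap_apply, evalVec_add, evalVec_smul, hcA, hcB, hcC, hcD, evalVec_lineConic,
      lform_self, lform_snd] <;>
    field_simp <;> exact Or.inl (mul_comm _ _)

lemma finrank_ker_Emap {A B C D : ℝ × ℝ}
    (hs : Function.Surjective (Emap A B C D)) :
    Module.finrank ℝ (LinearMap.ker (Emap A B C D)) = 2 := by
  have h := LinearMap.finrank_range_add_finrank_ker (Emap A B C D)
  rw [LinearMap.range_eq_top.2 hs] at h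
  rw [finrank_top] at h
  simp [Module.finrank_fin_fun] at h
  omega

/-- Any three vectors in the kernel of `Emap` are linearly dependent. -/
lemma dep3 {A B C D : ℝ × ℝ} (hs : Function.Surjective (Emap A B C D))
    {x y z : Fin 6 → ℝ} (hx : x ∈ LinearMap.ker (Emap A B C D))
    (hy : y ∈ LinearMap.ker (Emap A B C D)) (hz : z ∈ LinearMap.ker (Emap A B C D)) :
    ∃ s : Fin 3 → ℝ, (∃ i, s i ≠ 0) ∧ s 0 • x + s 1 • y + s 2 • z = 0 := by
  set K := LinearMap.ker (Emap A B C D)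
  set w : Fin 3 → K := ![⟨x, hx⟩, ⟨y, hy⟩, ⟨z, hz⟩] with hw
  have hnli : ¬ LinearIndependent ℝ w := by
    intro hli
    have hcard := hli.fintype_card_le_finrank
    rw [finrank_ker_Emap hs] at hcard
    simp at hcard
  obtain ⟨s, hsum, i, hi⟩ := Fintype.not_linearIndependent_iff.1 hnli
  refine ⟨s, ⟨i, hi⟩, ?_⟩
  have := congrArg (Subtype.val) hsum
  rw [Fin.sum_univ_three] at this
  simpa [hw] using this

/-- Coefficient vector of a conic. -/
def cvec (f : Conic) : Fin 6 → ℝ := ![f.a, f.b, f.c, f.d, f.e, f.g]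

lemma evalVec_cvec (f : Conic) (P : ℝ × ℝ) : evalVec (cvec f) P = f.eval P := rfl

lemma cvec_mem_ker {A B C D : ℝ × ℝ} {f : Conic} (hf : f.Through A B C D) :
    cvec f ∈ LinearMap.ker (Emap A B C D) := by
  rw [LinearMap.mem_ker, Emap_apply]
  funext i
  fin_cases i <;> simp [evalVec_cvec, hf.1, hf.2.1, hf.2.2.1, hf.2.2.2]

/-- The gradient of the defining polynomial at a point. -/
def gradv (f : Conic) (M : ℝ × ℝ) : ℝ × ℝ :=
  (2 * f.a * M.1 + f.b * M.2 + f.d, f.b * M.1 + 2 * f.c * M.2 + f.e)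

lemma gradv_eq_zero_of_center {h : Conic} {M : ℝ × ℝ} (hM : h.IsCenter M) :
    gradv h M = 0 := by
  have h1 := hM (1, 0)
  have h2 := hM (0, 1)
  simp only [Conic.eval, Prod.fst_add, Prod.snd_add, Prod.fst_sub, Prod.snd_sub] at h1 h2
  apply Prod.ext
  · show 2 * h.a * M.1 + h.b * M.2 + h.d = 0
    norm_num at h1
    linear_combination h1 / 2
  · show h.b * M.1 + 2 * h.c * M.2 + h.e = 0
    norm_num at h2
    linear_combination h2 / 2

lemma eval_symm {f : Conic} {M v : ℝ × ℝ}
    (hg : (gradv f M).1 * v.1 + (gradv f M).2 * v.2 = 0) (t : ℝ) :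
    f.eval (M + (-t) • v) = f.eval (M + t • v) := by
  simp only [gradv] at hg
  simp only [Conic.eval, Prod.fst_add, Prod.snd_add, Prod.smul_fst, Prod.smul_snd,
    smul_eq_mul]
  linear_combination (-2 * t) * hg

lemma cvec0 (f : Conic) : cvec f 0 = f.a := rfl
lemma cvec1 (f : Conic) : cvec f 1 = f.b := rfl
lemma cvec2 (f : Conic) : cvec f 2 = f.c := rfl
lemma cvec3 (f : Conic) : cvec f 3 = f.d := rfl
lemma cvec4 (f : Conic) : cvec f 4 = f.e := rfl
lemma cvec5 (f : Conic) : cvec f 5 = f.g := rfl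

/-- Key step: all members of the family have gradient at `M` parallel to a fixed one. -/
lemma grad_parallel {A B C D M : ℝ × ℝ}
    (hs : Function.Surjective (Emap A B C D))
    {h f0 f : Conic} (hh0 : h.Nonzero) (hhT : h.Through A B C D)
    (hgh : gradv h M = 0)
    (hf0T : f0.Through A B C D) (hf0g : gradv f0 M ≠ 0)
    (hfT : f.Through A B C D) :
    (gradv f M).1 * (-(gradv f0 M).2) + (gradv f M).2 * (gradv f0 M).1 = 0 := by
  obtain ⟨s, ⟨i, hi⟩, hsum⟩ := dep3 hs (cvec_mem_ker hhT) (cvec_mem_ker hf0T)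
    (cvec_mem_ker hfT)
  have E : ∀ j : Fin 6, s 0 * cvec h j + s 1 * cvec f0 j + s 2 * cvec f j = 0 := by
    intro j
    have := congrFun hsum j
    simpa [Pi.add_apply, Pi.smul_apply, smul_eq_mul] using this
  have E0 := E 0; have E1 := E 1; have E2 := E 2; have E3 := E 3; have E4 := E 4
  have E5 := E 5
  rw [cvec0, cvec0, cvec0] at E0
  rw [cvec1, cvec1, cvec1] at E1
  rw [cvec2, cvec2, cvec2] at E2
  rw [cvec3, cvec3, cvec3] at E3
  rw [cvec4, cvec4, cvec4] at E4
  rw [cvec5, cvec5, cvec5] at E5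
  have gh1 : 2 * h.a * M.1 + h.b * M.2 + h.d = 0 := congrArg Prod.fst hgh
  have gh2 : h.b * M.1 + 2 * h.c * M.2 + h.e = 0 := congrArg Prod.snd hgh
  -- the two gradient relations
  have e1 : s 1 * (gradv f0 M).1 + s 2 * (gradv f M).1 = 0 := by
    simp only [gradv]
    linear_combination 2 * M.1 * E0 + M.2 * E1 + E3 - s 0 * gh1
  have e2 : s 1 * (gradv f0 M).2 + s 2 * (gradv f M).2 = 0 := by
    simp only [gradv]
    linear_combination M.1 * E1 + 2 * M.2 * E2 + E4 - s 0 * gh2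
  by_cases hs2 : s 2 = 0
  · exfalso
    have hs1 : s 1 = 0 := by
      by_contra hs1
      apply hf0g
      have w1 : (gradv f0 M).1 = 0 := by
        have h' := e1; rw [hs2] at h'
        simp only [zero_mul, add_zero] at h'
        rcases mul_eq_zero.1 h' with h'' | h''
        · exact absurd h'' hs1
        · exact h''
      have w2 : (gradv f0 M).2 = 0 := by
        have h' := e2; rw [hs2] at h'
        simp only [zero_mul, add_zero] at h'
        rcases mul_eq_zero.1 h' with h'' | h''
        · exact absurd h'' hs1
        · exact h''
      exact Prod.ext w1 w2
    have hs0 : s 0 ≠ 0 := by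
      fin_cases i
      · exact hi
      · exact absurd hs1 hi
      · exact absurd hs2 hi
    apply hh0
    rw [hs1, hs2] at E0 E1 E2 E3 E4 E5
    simp at E0 E1 E2 E3 E4 E5
    exact ⟨by tauto, by tauto, by tauto, by tauto, by tauto, by tauto⟩
  · have key : s 2 * ((gradv f M).1 * (-(gradv f0 M).2) + (gradv f M).2 * (gradv f0 M).1)
        = 0 := by
      linear_combination (-(gradv f0 M).2) * e1 + (gradv f0 M).1 * e2
    rcases mul_eq_zero.1 key with h' | h'
    · exact absurd h' hs2
    · exact h'

/-- **Centers of conics of the family are butterfly points.** If `M` is the center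
of some conic through the four base points, then there is a line `ℓ` through `M`
(with direction `v`) such that every conic through the four base points whose zero
set does not contain `ℓ` meets `ℓ` in a set symmetric about `M`. -/
theorem center_is_butterfly_point
    (A B C D : ℝ × ℝ) (hgen : NoThreeCollinear A B C D)
    (M : ℝ × ℝ) (hMA : M ≠ A) (hMB : M ≠ B) (hMC : M ≠ C) (hMD : M ≠ D)
    (h : Conic) (hh0 : h.Nonzero) (hh : h.Through A B C D) (hM : h.IsCenter M) :
    ∃ v : ℝ × ℝ, v ≠ 0 ∧
      ∀ f : Conic, f.Nonzero → f.Through A B C D →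
        ¬ (∀ t : ℝ, f.eval (M + t • v) = 0) →
        ∀ t : ℝ, f.eval (M + t • v) = 0 ↔ f.eval (M + (-t) • v) = 0 := by
  obtain ⟨h1, h2, h3, h4⟩ := hgen
  have hs : Function.Surjective (Emap A B C D) := Emap_surjective h1 h2 h3
  have hgh : gradv h M = 0 := gradv_eq_zero_of_center hM
  by_cases hex : ∃ f0 : Conic, f0.Through A B C D ∧ gradv f0 M ≠ 0
  · obtain ⟨f0, hf0T, hf0g⟩ := hex
    refine ⟨(-(gradv f0 M).2, (gradv f0 M).1), ?_, ?_⟩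
    · intro hv
      apply hf0g
      have hv1 : -(gradv f0 M).2 = 0 := congrArg Prod.fst hv
      have hv2 : (gradv f0 M).1 = 0 := congrArg Prod.snd hv
      exact Prod.ext hv2 (neg_eq_zero.1 hv1)
    · intro f _ hfT _ t
      have hdot := grad_parallel hs hh0 hh hgh hf0T hf0g hfT
      rw [eval_symm (v := (-(gradv f0 M).2, (gradv f0 M).1)) hdot t]
  · push_neg at hex
    refine ⟨(1, 0), ?_, ?_⟩
    · intro hv
      have : (1 : ℝ) = 0 := congrArg Prod.fst hv
      norm_num at this
    · intro f _ hfT _ t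
      have hg0 : gradv f M = 0 := hex f hfT
      have hdot : (gradv f M).1 * (1 : ℝ) + (gradv f M).2 * (0 : ℝ) = 0 := by
        rw [hg0]; simp
      rw [eval_symm (v := ((1 : ℝ), (0 : ℝ))) hdot t]
end

section
/- Let A, B, C, D ∈ ℝ² with no three collinear, let v ∈ ℝ² be nonzero, let M ∈ ℝ², and suppose the line ℓ = {M + t·v : t ∈ ℝ} contains none of A, B, C, D. Suppose there are conics f₁ and f₂ through A, B, C, D and real numbers t₁ > 0, t₂ > 0 with t₁ ≠ t₂ such that the intersection of the zero set of fᵢ with ℓ is exactly {M + tᵢ·v, M − tᵢ·v} for i = 1, 2. Then there exists a nonzero polynomial f(x, y) of degree at most 2 vanishing at A, B, C, D such that f(M + w) = f(M − w) for all w ∈ ℝ², i.e., M is a center of some (possibly degenerate) conic through A, B, C, D. -/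
/-- Half the x-derivative of `f` at `M`. -/
def BFL1 (M : ℝ × ℝ) (f : Conic) : ℝ := 2 * f.a * M.1 + f.b * M.2 + f.d

/-- Half the y-derivative of `f` at `M`. -/
def BFL2 (M : ℝ × ℝ) (f : Conic) : ℝ := f.b * M.1 + 2 * f.c * M.2 + f.e

lemma BFkey (M w : ℝ × ℝ) (f : Conic) :
    f.eval (M + w) - f.eval (M - w) = 2 * (BFL1 M f * w.1 + BFL2 M f * w.2) := by
  simp only [Conic.eval, BFL1, BFL2, Prod.fst_add, Prod.snd_add, Prod.fst_sub, Prod.snd_sub]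
  ring

/-- Linear combination `s·f₂ − u·f₁` of two conics. -/
def BFcombo (s u : ℝ) (f₁ f₂ : Conic) : Conic :=
  ⟨s * f₂.a - u * f₁.a, s * f₂.b - u * f₁.b, s * f₂.c - u * f₁.c,
   s * f₂.d - u * f₁.d, s * f₂.e - u * f₁.e, s * f₂.g - u * f₁.g⟩

lemma BFcombo_eval (s u : ℝ) (f₁ f₂ : Conic) (p : ℝ × ℝ) :
    (BFcombo s u f₁ f₂).eval p = s * f₂.eval p - u * f₁.eval p := by
  simp only [Conic.eval, BFcombo]; ring

lemma BFcombo_L1 (M : ℝ × ℝ) (s u : ℝ) (f₁ f₂ : Conic) :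
    BFL1 M (BFcombo s u f₁ f₂) = s * BFL1 M f₂ - u * BFL1 M f₁ := by
  simp only [BFL1, BFcombo]; ring

lemma BFcombo_L2 (M : ℝ × ℝ) (s u : ℝ) (f₁ f₂ : Conic) :
    BFL2 M (BFcombo s u f₁ f₂) = s * BFL2 M f₂ - u * BFL2 M f₁ := by
  simp only [BFL2, BFcombo]; ring

/-- **Butterfly points are centers of conics of the family.** If two conics
through the four base points cut the line `ℓ = {M + t·v}` in two different pairs
of points symmetric about `M`, then `M` is a center of some (possibly degenerate)
conic through the four base points. -/
theorem butterfly_point_is_center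
    (A B C D : ℝ × ℝ) (hgen : NoThreeCollinear A B C D)
    (v : ℝ × ℝ) (hv : v ≠ 0) (M : ℝ × ℝ)
    (hAl : A ∉ parmLine M v) (hBl : B ∉ parmLine M v)
    (hCl : C ∉ parmLine M v) (hDl : D ∉ parmLine M v)
    (f₁ f₂ : Conic) (hf₁0 : f₁.Nonzero) (hf₂0 : f₂.Nonzero)
    (hf₁ : f₁.Through A B C D) (hf₂ : f₂.Through A B C D)
    (t₁ t₂ : ℝ) (ht₁ : 0 < t₁) (ht₂ : 0 < t₂) (ht : t₁ ≠ t₂)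
    (hf₁ℓ : {p ∈ parmLine M v | f₁.eval p = 0} = {M + t₁ • v, M - t₁ • v})
    (hf₂ℓ : {p ∈ parmLine M v | f₂.eval p = 0} = {M + t₂ • v, M - t₂ • v}) :
    ∃ f : Conic, f.Nonzero ∧ f.Through A B C D ∧ f.IsCenter M := by
  -- evaluation facts at the four intersection points
  have h1p : f₁.eval (M + t₁ • v) = 0 := by
    have h : (M + t₁ • v) ∈ {p ∈ parmLine M v | f₁.eval p = 0} := by
      rw [hf₁ℓ]; exact Set.mem_insert _ _
    exact h.2
  have h1m : f₁.eval (M - t₁ • v) = 0 := by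
    have h : (M - t₁ • v) ∈ {p ∈ parmLine M v | f₁.eval p = 0} := by
      rw [hf₁ℓ]; exact Set.mem_insert_iff.mpr (Or.inr rfl)
    exact h.2
  have h2p : f₂.eval (M + t₂ • v) = 0 := by
    have h : (M + t₂ • v) ∈ {p ∈ parmLine M v | f₂.eval p = 0} := by
      rw [hf₂ℓ]; exact Set.mem_insert _ _
    exact h.2
  have h2m : f₂.eval (M - t₂ • v) = 0 := by
    have h : (M - t₂ • v) ∈ {p ∈ parmLine M v | f₂.eval p = 0} := by
      rw [hf₂ℓ]; exact Set.mem_insert_iff.mpr (Or.inr rfl)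
    exact h.2
  -- both gradients at M are orthogonal to v
  have e1 : BFL1 M f₁ * v.1 + BFL2 M f₁ * v.2 = 0 := by
    have hk := BFkey M (t₁ • v) f₁
    rw [h1p, h1m] at hk
    simp only [Prod.smul_fst, Prod.smul_snd, smul_eq_mul] at hk
    have h0 : t₁ * (BFL1 M f₁ * v.1 + BFL2 M f₁ * v.2) = 0 := by linear_combination (-1/2) * hk
    exact (mul_eq_zero.mp h0).resolve_left (ne_of_gt ht₁)
  have e2 : BFL1 M f₂ * v.1 + BFL2 M f₂ * v.2 = 0 := by
    have hk := BFkey M (t₂ • v) f₂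
    rw [h2p, h2m] at hk
    simp only [Prod.smul_fst, Prod.smul_snd, smul_eq_mul] at hk
    have h0 : t₂ * (BFL1 M f₂ * v.1 + BFL2 M f₂ * v.2) = 0 := by linear_combination (-1/2) * hk
    exact (mul_eq_zero.mp h0).resolve_left (ne_of_gt ht₂)
  -- cross product of the two gradients vanishes
  have hvc : v.1 ≠ 0 ∨ v.2 ≠ 0 := by
    by_contra h
    push_neg at h
    exact hv (Prod.ext h.1 h.2)
  have hcross : BFL1 M f₁ * BFL2 M f₂ - BFL2 M f₁ * BFL1 M f₂ = 0 := by
    rcases hvc with h | h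
    · have hc : v.1 * (BFL1 M f₁ * BFL2 M f₂ - BFL2 M f₁ * BFL1 M f₂) = 0 := by
        linear_combination BFL2 M f₂ * e1 - BFL2 M f₁ * e2
      exact (mul_eq_zero.mp hc).resolve_left h
    · have hc : v.2 * (BFL1 M f₁ * BFL2 M f₂ - BFL2 M f₁ * BFL1 M f₂) = 0 := by
        linear_combination BFL1 M f₁ * e2 - BFL1 M f₂ * e1
      exact (mul_eq_zero.mp hc).resolve_left h
  -- general step: a suitable combination works whenever `s ≠ 0` kills the gradient
  have main : ∀ s u : ℝ, s ≠ 0 → s * BFL1 M f₂ = u * BFL1 M f₁ →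
      s * BFL2 M f₂ = u * BFL2 M f₁ →
      ∃ f : Conic, f.Nonzero ∧ f.Through A B C D ∧ f.IsCenter M := by
    intro s u hs hL1 hL2
    refine ⟨BFcombo s u f₁ f₂, ?_, ?_, ?_⟩
    · -- nonzero
      intro hzero
      simp only [BFcombo] at hzero
      obtain ⟨ha, hb, hc, hd, he, hg⟩ := hzero
      have hval : s * f₂.eval (M + t₁ • v) = u * f₁.eval (M + t₁ • v) := by
        simp only [Conic.eval]
        linear_combination (M + t₁ • v).1 ^ 2 * ha + (M + t₁ • v).1 * (M + t₁ • v).2 * hb +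
          (M + t₁ • v).2 ^ 2 * hc + (M + t₁ • v).1 * hd + (M + t₁ • v).2 * he + hg
      rw [h1p, mul_zero] at hval
      have heval2 : f₂.eval (M + t₁ • v) = 0 :=
        (mul_eq_zero.mp hval).resolve_left hs
      have hmem : (M + t₁ • v) ∈ {p ∈ parmLine M v | f₂.eval p = 0} :=
        ⟨⟨t₁, rfl⟩, heval2⟩
      rw [hf₂ℓ] at hmem
      rcases hmem with hmem | hmem
      · have h' : t₁ • v = t₂ • v := add_left_cancel hmem
        have h'' : (t₁ - t₂) • v = 0 := by rw [sub_smul, h', sub_self]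
        rcases smul_eq_zero.mp h'' with h3 | h3
        · exact ht (by linarith [sub_eq_zero.mp h3])
        · exact hv h3
      · have hmem' : M + t₁ • v = M + (-t₂) • v := by
          rw [hmem, sub_eq_add_neg, neg_smul]
        have h' : t₁ • v = (-t₂) • v := add_left_cancel hmem'
        have h'' : (t₁ - (-t₂)) • v = 0 := by rw [sub_smul, h', sub_self]
        rcases smul_eq_zero.mp h'' with h3 | h3
        · have := sub_eq_zero.mp h3; linarith
        · exact hv h3
    · -- through the four points
      obtain ⟨hA1, hB1, hC1, hD1⟩ := hf₁
      obtain ⟨hA2, hB2, hC2, hD2⟩ := hf₂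
      refine ⟨?_, ?_, ?_, ?_⟩ <;>
        rw [BFcombo_eval] <;>
        simp [hA1, hB1, hC1, hD1, hA2, hB2, hC2, hD2]
    · -- center
      intro w
      have hk := BFkey M w (BFcombo s u f₁ f₂)
      rw [BFcombo_L1, BFcombo_L2] at hk
      have hz1 : s * BFL1 M f₂ - u * BFL1 M f₁ = 0 := by rw [hL1, sub_self]
      have hz2 : s * BFL2 M f₂ - u * BFL2 M f₁ = 0 := by rw [hL2, sub_self]
      rw [hz1, hz2] at hk
      simp at hk
      linarith [hk]
  -- case analysis on the gradient of f₁ at M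
  by_cases h1 : BFL1 M f₁ = 0
  · by_cases h2 : BFL2 M f₁ = 0
    · -- f₁ itself is centered at M
      refine ⟨f₁, hf₁0, hf₁, ?_⟩
      intro w
      have hk := BFkey M w f₁
      rw [h1, h2] at hk
      simp at hk
      linarith [hk]
    · exact main (BFL2 M f₁) (BFL2 M f₂) h2
        (by linear_combination -hcross) (mul_comm _ _)
  · exact main (BFL1 M f₁) (BFL1 M f₂) h1
      (mul_comm _ _) (by linear_combination hcross)
end

section
/- Let A, B, C, D be pairwise distinct points of ℝ² lying on a circle with center O and radius r > 0. Then there exists a nonzero polynomial g(x, y) = a·x² + b·x·y + c·y² + d·x + e·y + k with a + c = 0 such that g vanishes at the six midpoints (A+B)/2, (A+C)/2, (A+D)/2, (B+C)/2, (B+D)/2, (C+D)/2, at every point lying on two opposite sides of the quadrangle (on the line through A, B and the line through C, D; or on the line through A, C and the line through B, D; or on the line through A, D and the line through B, C), and at the center O of the circle. -/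
/-- `P` lies on the circle with center `O` and radius `r`. -/
def OnCircle (P O : ℝ × ℝ) (r : ℝ) : Prop :=
  (P.1 - O.1) ^ 2 + (P.2 - O.2) ^ 2 = r ^ 2


/-- The nine-point (eleven-point) conic of the quadrangle `A B C D`,
defined with explicit polynomial coefficients. -/
noncomputable def npc (A B C D : ℝ × ℝ) : Conic :=
  ⟨(2*B.2*C.2*C.2*D.1 - 2*B.2*C.1*D.2*D.2 - 2*B.2*B.2*C.2*D.1 + 2*B.2*B.2*C.1*D.2 + 2*B.1*C.2*D.2*D.2 - 2*B.1*C.2*C.2*D.2 - 2*A.2*C.2*C.2*D.1 + 2*A.2*C.1*D.2*D.2 + 2*A.2*B.2*B.2*D.1 - 2*A.2*B.2*B.2*C.1 - 2*A.2*B.1*D.2*D.2 + 2*A.2*B.1*C.2*C.2 + 2*A.2*A.2*C.2*D.1 - 2*A.2*A.2*C.1*D.2 - 2*A.2*A.2*B.2*D.1 + 2*A.2*A.2*B.2*C.1 + 2*A.2*A.2*B.1*D.2 - 2*A.2*A.2*B.1*C.2 - 2*A.1*C.2*D.2*D.2 + 2*A.1*C.2*C.2*D.2 + 2*A.1*B.2*D.2*D.2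 - 2*A.1*B.2*C.2*C.2 - 2*A.1*B.2*B.2*D.2 + 2*A.1*B.2*B.2*C.2),
   (4*B.2*C.1*D.1*D.2 - 4*B.2*C.1*C.2*D.1 - 4*B.1*C.2*D.1*D.2 + 4*B.1*C.1*C.2*D.2 + 4*B.1*B.2*C.2*D.1 - 4*B.1*B.2*C.1*D.2 - 4*A.2*C.1*D.1*D.2 + 4*A.2*C.1*C.2*D.1 + 4*A.2*B.1*D.1*D.2 - 4*A.2*B.1*C.1*C.2 - 4*A.2*B.1*B.2*D.1 + 4*A.2*B.1*B.2*C.1 + 4*A.1*C.2*D.1*D.2 - 4*A.1*C.1*C.2*D.2 - 4*A.1*B.2*D.1*D.2 + 4*A.1*B.2*C.1*C.2 + 4*A.1*B.1*B.2*D.2 - 4*A.1*B.1*B.2*C.2 - 4*A.1*A.2*C.2*D.1 + 4*A.1*A.2*C.1*D.2 + 4*A.1*A.2*B.2*D.1 - 4*A.1*A.2*B.2*C.1 - 4*A.1*A.2*B.1*D.2 + 4*A.1*A.2*B.1*C.2),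
   (-2*B.2*C.1*D.1*D.1 + 2*B.2*C.1*C.1*D.1 + 2*B.1*C.2*D.1*D.1 - 2*B.1*C.1*C.1*D.2 - 2*B.1*B.1*C.2*D.1 + 2*B.1*B.1*C.1*D.2 + 2*A.2*C.1*D.1*D.1 - 2*A.2*C.1*C.1*D.1 - 2*A.2*B.1*D.1*D.1 + 2*A.2*B.1*C.1*C.1 + 2*A.2*B.1*B.1*D.1 - 2*A.2*B.1*B.1*C.1 - 2*A.1*C.2*D.1*D.1 + 2*A.1*C.1*C.1*D.2 + 2*A.1*B.2*D.1*D.1 - 2*A.1*B.2*C.1*C.1 - 2*A.1*B.1*B.1*D.2 + 2*A.1*B.1*B.1*C.2 + 2*A.1*A.1*C.2*D.1 - 2*A.1*A.1*C.1*D.2 - 2*A.1*A.1*B.2*D.1 + 2*A.1*A.1*B.2*C.1 + 2*A.1*A.1*B.1*D.2 - 2*A.1*A.1*B.1*C.2),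
   (-B.2*C.2*C.2*D.1*D.1 + B.2*C.1*C.1*D.2*D.2 + B.2*B.2*C.2*D.1*D.1 - 2*B.2*B.2*C.1*D.1*D.2 + 2*B.2*B.2*C.1*C.2*D.1 - B.2*B.2*C.1*C.1*D.2 + 2*B.1*C.2*C.2*D.1*D.2 - 2*B.1*C.1*C.2*D.2*D.2 - 2*B.1*B.2*C.2*C.2*D.1 + 2*B.1*B.2*C.1*D.2*D.2 - B.1*B.1*C.2*D.2*D.2 + B.1*B.1*C.2*C.2*D.2 + A.2*C.2*C.2*D.1*D.1 - A.2*C.1*C.1*D.2*D.2 - A.2*B.2*B.2*D.1*D.1 + A.2*B.2*B.2*C.1*C.1 + A.2*B.1*B.1*D.2*D.2 - A.2*B.1*B.1*C.2*C.2 - A.2*A.2*C.2*D.1*D.1 + 2*A.2*A.2*C.1*D.1*D.2 - 2*A.2*A.2*C.1*C.2*D.1 + A.2*A.2*C.1*C.1*D.2 + A.2*A.2*B.2*D.1*D.1 - A.2*A.2*B.2*C.1*C.1 - 2*A.2*A.2*B.1*D.1*D.2 + 2*A.2*A.2*B.1*C.1*C.2 + 2*A.2*A.2*B.1*B.2*D.1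 - 2*A.2*A.2*B.1*B.2*C.1 - A.2*A.2*B.1*B.1*D.2 + A.2*A.2*B.1*B.1*C.2 - 2*A.1*C.2*C.2*D.1*D.2 + 2*A.1*C.1*C.2*D.2*D.2 + 2*A.1*B.2*B.2*D.1*D.2 - 2*A.1*B.2*B.2*C.1*C.2 - 2*A.1*B.1*B.2*D.2*D.2 + 2*A.1*B.1*B.2*C.2*C.2 + 2*A.1*A.2*C.2*C.2*D.1 - 2*A.1*A.2*C.1*D.2*D.2 - 2*A.1*A.2*B.2*B.2*D.1 + 2*A.1*A.2*B.2*B.2*C.1 + 2*A.1*A.2*B.1*D.2*D.2 - 2*A.1*A.2*B.1*C.2*C.2 + A.1*A.1*C.2*D.2*D.2 - A.1*A.1*C.2*C.2*D.2 - A.1*A.1*B.2*D.2*D.2 + A.1*A.1*B.2*C.2*C.2 + A.1*A.1*B.2*B.2*D.2 - A.1*A.1*B.2*B.2*C.2),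
   (2*B.2*C.1*C.2*D.1*D.1 - 2*B.2*C.1*C.1*D.1*D.2 + B.2*B.2*C.1*D.1*D.1 - B.2*B.2*C.1*C.1*D.1 - B.1*C.2*C.2*D.1*D.1 + B.1*C.1*C.1*D.2*D.2 - 2*B.1*B.2*C.2*D.1*D.1 + 2*B.1*B.2*C.1*C.1*D.2 + 2*B.1*B.1*C.2*D.1*D.2 + B.1*B.1*C.2*C.2*D.1 - B.1*B.1*C.1*D.2*D.2 - 2*B.1*B.1*C.1*C.2*D.2 - 2*A.2*C.1*C.2*D.1*D.1 + 2*A.2*C.1*C.1*D.1*D.2 + 2*A.2*B.1*B.2*D.1*D.1 - 2*A.2*B.1*B.2*C.1*C.1 - 2*A.2*B.1*B.1*D.1*D.2 + 2*A.2*B.1*B.1*C.1*C.2 - A.2*A.2*C.1*D.1*D.1 + A.2*A.2*C.1*C.1*D.1 + A.2*A.2*B.1*D.1*D.1 - A.2*A.2*B.1*C.1*C.1 - A.2*A.2*B.1*B.1*D.1 + A.2*A.2*B.1*B.1*C.1 + A.1*C.2*C.2*D.1*D.1 - A.1*C.1*C.1*D.2*D.2 - A.1*B.2*B.2*D.1*D.1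 + A.1*B.2*B.2*C.1*C.1 + A.1*B.1*B.1*D.2*D.2 - A.1*B.1*B.1*C.2*C.2 + 2*A.1*A.2*C.2*D.1*D.1 - 2*A.1*A.2*C.1*C.1*D.2 - 2*A.1*A.2*B.2*D.1*D.1 + 2*A.1*A.2*B.2*C.1*C.1 + 2*A.1*A.2*B.1*B.1*D.2 - 2*A.1*A.2*B.1*B.1*C.2 - 2*A.1*A.1*C.2*D.1*D.2 - A.1*A.1*C.2*C.2*D.1 + A.1*A.1*C.1*D.2*D.2 + 2*A.1*A.1*C.1*C.2*D.2 + 2*A.1*A.1*B.2*D.1*D.2 - 2*A.1*A.1*B.2*C.1*C.2 + A.1*A.1*B.2*B.2*D.1 - A.1*A.1*B.2*B.2*C.1 - A.1*A.1*B.1*D.2*D.2 + A.1*A.1*B.1*C.2*C.2 - 2*A.1*A.1*B.1*B.2*D.2 + 2*A.1*A.1*B.1*B.2*C.2),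
   (-B.2*B.2*C.1*C.2*D.1*D.1 + B.2*B.2*C.1*C.1*D.1*D.2 + B.1*B.2*C.2*C.2*D.1*D.1 - B.1*B.2*C.1*C.1*D.2*D.2 - B.1*B.1*C.2*C.2*D.1*D.2 + B.1*B.1*C.1*C.2*D.2*D.2 + A.2*A.2*C.1*C.2*D.1*D.1 - A.2*A.2*C.1*C.1*D.1*D.2 - A.2*A.2*B.1*B.2*D.1*D.1 + A.2*A.2*B.1*B.2*C.1*C.1 + A.2*A.2*B.1*B.1*D.1*D.2 - A.2*A.2*B.1*B.1*C.1*C.2 - A.1*A.2*C.2*C.2*D.1*D.1 + A.1*A.2*C.1*C.1*D.2*D.2 + A.1*A.2*B.2*B.2*D.1*D.1 - A.1*A.2*B.2*B.2*C.1*C.1 - A.1*A.2*B.1*B.1*D.2*D.2 + A.1*A.2*B.1*B.1*C.2*C.2 + A.1*A.1*C.2*C.2*D.1*D.2 - A.1*A.1*C.1*C.2*D.2*D.2 - A.1*A.1*B.2*B.2*D.1*D.2 + A.1*A.1*B.2*B.2*C.1*C.2 + A.1*A.1*B.1*B.2*D.2*D.2 - A.1*A.1*B.1*B.2*C.2*C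.2)⟩

lemma cross_ne_of_circle (O : ℝ × ℝ) (r : ℝ) (hr : 0 < r) (P Q R : ℝ × ℝ)
    (hPQ : P ≠ Q) (hPR : P ≠ R) (hQR : Q ≠ R)
    (hP : OnCircle P O r) (hQ : OnCircle Q O r) (hR : OnCircle R O r) :
    (Q.1 - P.1) * (R.2 - P.2) - (Q.2 - P.2) * (R.1 - P.1) ≠ 0 := by
  intro h
  have hP' : (P.1 - O.1) ^ 2 + (P.2 - O.2) ^ 2 = r ^ 2 := hP
  have hQ' : (Q.1 - O.1) ^ 2 + (Q.2 - O.2) ^ 2 = r ^ 2 := hQ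
  have hR' : (R.1 - O.1) ^ 2 + (R.2 - O.2) ^ 2 = r ^ 2 := hR
  have hv : (Q.1 - P.1) ^ 2 + (Q.2 - P.2) ^ 2 ≠ 0 := by
    intro h0
    apply hPQ
    have h1 : (Q.1 - P.1) ^ 2 = 0 := by nlinarith [sq_nonneg (Q.1 - P.1), sq_nonneg (Q.2 - P.2)]
    have h2 : (Q.2 - P.2) ^ 2 = 0 := by nlinarith [sq_nonneg (Q.1 - P.1), sq_nonneg (Q.2 - P.2)]
    have h1' := pow_eq_zero_iff (n := 2) (by norm_num) |>.mp h1
    have h2' := pow_eq_zero_iff (n := 2) (by norm_num) |>.mp h2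
    exact Prod.ext (by linarith) (by linarith)
  have e1 : (R.1 - P.1) * ((Q.1 - P.1) ^ 2 + (Q.2 - P.2) ^ 2) =
      ((R.1 - P.1) * (Q.1 - P.1) + (R.2 - P.2) * (Q.2 - P.2)) * (Q.1 - P.1) := by
    linear_combination (-(Q.2 - P.2)) * h
  have e2 : (R.2 - P.2) * ((Q.1 - P.1) ^ 2 + (Q.2 - P.2) ^ 2) =
      ((R.1 - P.1) * (Q.1 - P.1) + (R.2 - P.2) * (Q.2 - P.2)) * (Q.2 - P.2) := by
    linear_combination (Q.1 - P.1) * h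
  have key : ((R.1 - P.1) * (Q.1 - P.1) + (R.2 - P.2) * (Q.2 - P.2)) *
      (((Q.1 - P.1) ^ 2 + (Q.2 - P.2) ^ 2) *
      (((R.1 - P.1) * (Q.1 - P.1) + (R.2 - P.2) * (Q.2 - P.2)) -
        ((Q.1 - P.1) ^ 2 + (Q.2 - P.2) ^ 2))) = 0 := by
    linear_combination (((Q.1 - P.1) ^ 2 + (Q.2 - P.2) ^ 2) ^ 2) * hR' -
      (((Q.1 - P.1) ^ 2 + (Q.2 - P.2) ^ 2) ^ 2) * hP' -
      (((R.1 - P.1) * (Q.1 - P.1) + (R.2 - P.2) * (Q.2 - P.2)) *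
        ((Q.1 - P.1) ^ 2 + (Q.2 - P.2) ^ 2)) * hQ' +
      (((R.1 - P.1) * (Q.1 - P.1) + (R.2 - P.2) * (Q.2 - P.2)) *
        ((Q.1 - P.1) ^ 2 + (Q.2 - P.2) ^ 2)) * hP' -
      (2 * ((Q.1 - P.1) ^ 2 + (Q.2 - P.2) ^ 2) * (P.1 - O.1) +
        ((Q.1 - P.1) ^ 2 + (Q.2 - P.2) ^ 2) * (R.1 - P.1) +
        ((R.1 - P.1) * (Q.1 - P.1) + (R.2 - P.2) * (Q.2 - P.2)) * (Q.1 - P.1)) * e1 -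
      (2 * ((Q.1 - P.1) ^ 2 + (Q.2 - P.2) ^ 2) * (P.2 - O.2) +
        ((Q.1 - P.1) ^ 2 + (Q.2 - P.2) ^ 2) * (R.2 - P.2) +
        ((R.1 - P.1) * (Q.1 - P.1) + (R.2 - P.2) * (Q.2 - P.2)) * (Q.2 - P.2)) * e2
  rcases mul_eq_zero.mp key with hd | h'
  · have r1 : (R.1 - P.1) * ((Q.1 - P.1) ^ 2 + (Q.2 - P.2) ^ 2) = 0 := by
      rw [e1, hd, zero_mul]
    have r2 : (R.2 - P.2) * ((Q.1 - P.1) ^ 2 + (Q.2 - P.2) ^ 2) = 0 := by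
      rw [e2, hd, zero_mul]
    have r1' := (mul_eq_zero.mp r1).resolve_right hv
    have r2' := (mul_eq_zero.mp r2).resolve_right hv
    exact hPR (Prod.ext (by linarith) (by linarith))
  · rcases mul_eq_zero.mp h' with hv0 | hd
    · exact hv hv0
    · have r1 : (R.1 - Q.1) * ((Q.1 - P.1) ^ 2 + (Q.2 - P.2) ^ 2) = 0 := by
        linear_combination e1 + (Q.1 - P.1) * hd
      have r2 : (R.2 - Q.2) * ((Q.1 - P.1) ^ 2 + (Q.2 - P.2) ^ 2) = 0 := by
        linear_combination e2 + (Q.2 - P.2) * hd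
      have r1' := (mul_eq_zero.mp r1).resolve_right hv
      have r2' := (mul_eq_zero.mp r2).resolve_right hv
      exact hQR (Prod.ext (by linarith) (by linarith))

lemma line_cross_of_mem (P Q E : ℝ × ℝ)
    (hmem : E ∈ affineSpan ℝ ({P, Q} : Set (ℝ × ℝ))) :
    (E.1 - P.1) * (Q.2 - P.2) - (E.2 - P.2) * (Q.1 - P.1) = 0 := by
  have h' : (E - P) +ᵥ P ∈ affineSpan ℝ ({P, Q} : Set (ℝ × ℝ)) := by
    simpa [vadd_eq_add, sub_add_cancel] using hmem
  obtain ⟨s, hs⟩ := vadd_left_mem_affineSpan_pair.mp h'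
  have h1 : s * (Q.1 - P.1) = E.1 - P.1 := congrArg Prod.fst hs
  have h2 : s * (Q.2 - P.2) = E.2 - P.2 := congrArg Prod.snd hs
  linear_combination (Q.1 - P.1) * h2 - (Q.2 - P.2) * h1

/-- **The eleven-point conic of a concyclic quadrangle is a rectangular hyperbola
through the center of the circle.** For four pairwise distinct points on a circle
with center `O` there is a nonzero polynomial `a·x² + b·x·y + c·y² + d·x + e·y + k`
with `a + c = 0` vanishing at the six midpoints of the sides of the quadrangle,
at the three diagonal points of the quadrangle, and at the center `O`. -/
theorem eleven_point_conic_concyclic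
    (O : ℝ × ℝ) (r : ℝ) (hr : 0 < r)
    (A B C D : ℝ × ℝ)
    (hAB : A ≠ B) (hAC : A ≠ C) (hAD : A ≠ D)
    (hBC : B ≠ C) (hBD : B ≠ D) (hCD : C ≠ D)
    (hA : OnCircle A O r) (hB : OnCircle B O r)
    (hC : OnCircle C O r) (hD : OnCircle D O r) :
    ∃ g : Conic, g.Nonzero ∧ g.a + g.c = 0 ∧
      (g.eval (midpoint ℝ A B) = 0 ∧ g.eval (midpoint ℝ A C) = 0 ∧
       g.eval (midpoint ℝ A D) = 0 ∧ g.eval (midpoint ℝ B C) = 0 ∧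
       g.eval (midpoint ℝ B D) = 0 ∧ g.eval (midpoint ℝ C D) = 0) ∧
      (∀ E : ℝ × ℝ,
        ((E ∈ affineSpan ℝ ({A, B} : Set (ℝ × ℝ)) ∧
          E ∈ affineSpan ℝ ({C, D} : Set (ℝ × ℝ))) ∨
         (E ∈ affineSpan ℝ ({A, C} : Set (ℝ × ℝ)) ∧
          E ∈ affineSpan ℝ ({B, D} : Set (ℝ × ℝ))) ∨
         (E ∈ affineSpan ℝ ({A, D} : Set (ℝ × ℝ)) ∧
          E ∈ affineSpan ℝ ({B, C} : Set (ℝ × ℝ)))) → g.eval E = 0) ∧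
      g.eval O = 0 := by
  refine ⟨npc A B C D, ?_, ?_, ?_, ?_, ?_⟩
  · -- Nonzero
    intro hz
    obtain ⟨h1, h2, h3, h4, h5, h6⟩ := hz
    have hevalA : (npc A B C D).eval A =
        ((A.1 - C.1) * (D.2 - C.2) - (A.2 - C.2) * (D.1 - C.1)) *
        (((A.1 - B.1) * (D.2 - B.2) - (A.2 - B.2) * (D.1 - B.1)) *
        ((B.1 - A.1) * (C.2 - A.2) - (B.2 - A.2) * (C.1 - A.1))) := by
      simp only [npc, Conic.eval]; ring
    have z1 := cross_ne_of_circle O r hr C A D hAC.symm hCD hAD hC hA hD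
    have z2 := cross_ne_of_circle O r hr B A D hAB.symm hBD hAD hB hA hD
    have z3 := cross_ne_of_circle O r hr A B C hAB hAC hBC hA hB hC
    have : (npc A B C D).eval A = 0 := by
      simp only [Conic.eval, h1, h2, h3, h4, h5, h6]; ring
    rw [hevalA] at this
    exact (mul_ne_zero z1 (mul_ne_zero z2 z3)) this
  · -- a + c = 0
    have hA' : (A.1 - O.1) ^ 2 + (A.2 - O.2) ^ 2 = r ^ 2 := hA
    have hB' : (B.1 - O.1) ^ 2 + (B.2 - O.2) ^ 2 = r ^ 2 := hB
    have hC' : (C.1 - O.1) ^ 2 + (C.2 - O.2) ^ 2 = r ^ 2 := hC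
    have hD' : (D.1 - O.1) ^ 2 + (D.2 - O.2) ^ 2 = r ^ 2 := hD
    simp only [npc]
    linear_combination (2*(C.2-O.2)*(D.1-O.1) - 2*(C.1-O.1)*(D.2-O.2) - 2*(B.2-O.2)*(D.1-O.1) + 2*(B.2-O.2)*(C.1-O.1) + 2*(B.1-O.1)*(D.2-O.2) - 2*(B.1-O.1)*(C.2-O.2)) * hA' + (-2*(C.2-O.2)*(D.1-O.1) + 2*(C.1-O.1)*(D.2-O.2) + 2*(A.2-O.2)*(D.1-O.1) - 2*(A.2-O.2)*(C.1-O.1) - 2*(A.1-O.1)*(D.2-O.2) + 2*(A.1-O.1)*(C.2-O.2)) * hB' + (2*(B.2-O.2)*(D.1-O.1) - 2*(B.1-O.1)*(D.2-O.2) - 2*(A.2-O.2)*(D.1-O.1) + 2*(A.2-O.2)*(B.1-O.1) + 2*(A.1-O.1)*(D.2-O.2) - 2*(A.1-O.1)*(B.2-O.2)) * hC' + (-2*(B.2-O.2)*(C.1-O.1) + 2*(B.1-O.1)*(C.2-O.2) + 2*(A.2-O.2)*(C.1-O.1) - 2*(A.2-O.2)*(B.1-O.1) - 2*(A.1-O.1)*(C.2-O.2)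 + 2*(A.1-O.1)*(B.2-O.2)) * hD'
  · -- midpoints
    have hmid : ∀ P Q : ℝ × ℝ, midpoint ℝ P Q = ((P.1 + Q.1) / 2, (P.2 + Q.2) / 2) := by
      intro P Q
      rw [midpoint_eq_smul_add]
      ext <;> simp [Prod.smul_fst, Prod.smul_snd] <;> ring
    refine ⟨?_, ?_, ?_, ?_, ?_, ?_⟩ <;>
      rw [hmid] <;> simp only [npc, Conic.eval] <;> ring
  · -- diagonal points
    intro E hE
    rcases hE with ⟨hm1, hm2⟩ | ⟨hm1, hm2⟩ | ⟨hm1, hm2⟩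
    · have h1 := line_cross_of_mem A B E hm1
      have h2 := line_cross_of_mem C D E hm2
      simp only [npc, Conic.eval]
      linear_combination (C.2*D.1*D.2*E.1 - C.2*D.1*D.1*E.2 + C.2*C.2*D.1*E.1 - C.1*D.2*D.2*E.1 + C.1*D.1*D.2*E.2 - C.1*C.2*D.2*E.1 - C.1*C.2*D.1*E.2 + C.1*C.1*D.2*E.2 - 2*B.2*C.2*D.1*E.1 + B.2*C.2*D.1*D.1 + B.2*C.1*D.2*E.1 + B.2*C.1*D.1*E.2 - B.2*C.1*D.1*D.2 + B.2*C.1*C.2*E.1 - B.2*C.1*C.1*E.2 + B.1*C.2*D.2*E.1 + B.1*C.2*D.1*E.2 - B.1*C.2*D.1*D.2 - B.1*C.2*C.2*E.1 - 2*B.1*C.1*D.2*E.2 + B.1*C.1*D.2*D.2 + B.1*C.1*C.2*E.2 - A.2*D.1*D.2*E.1 + A.2*D.1*D.1*E.2 - A.2*C.2*D.1*E.1 + 2*A.2*C.1*D.2*E.1 - A.2*C.1*D.1*E.2 + A.2*C.1*C.2*D.1 - A.2*C.1*C.1*D.2 + 2*A.2*B.2*D.1*E.1 - A.2*B.2*D.1*D.1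 - 2*A.2*B.2*C.1*E.1 + A.2*B.2*C.1*C.1 - A.2*B.1*D.2*E.1 - A.2*B.1*D.1*E.2 + A.2*B.1*D.1*D.2 + A.2*B.1*C.2*E.1 + A.2*B.1*C.1*E.2 - A.2*B.1*C.1*C.2 + A.1*D.2*D.2*E.1 - A.1*D.1*D.2*E.2 - A.1*C.2*D.2*E.1 + 2*A.1*C.2*D.1*E.2 - A.1*C.2*C.2*D.1 - A.1*C.1*D.2*E.2 + A.1*C.1*C.2*D.2 - A.1*B.2*D.2*E.1 - A.1*B.2*D.1*E.2 + A.1*B.2*D.1*D.2 + A.1*B.2*C.2*E.1 + A.1*B.2*C.1*E.2 - A.1*B.2*C.1*C.2 + 2*A.1*B.1*D.2*E.2 - A.1*B.1*D.2*D.2 - 2*A.1*B.1*C.2*E.2 + A.1*B.1*C.2*C.2) * h1 + (-B.2*C.2*D.1*E.1 - B.2*C.1*D.2*E.1 + 2*B.2*C.1*D.1*E.2 + B.2*B.2*C.1*E.1 - B.2*B.2*C.1*D.1 + 2*B.1*C.2*D.2*E.1 - B.1*C.2*D.1*E.2 - B.1*C.1*D.2*E.2 - B.1*B.2*C.2*E.1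 + B.1*B.2*C.2*D.1 - B.1*B.2*C.1*E.2 + B.1*B.2*C.1*D.2 + B.1*B.1*C.2*E.2 - B.1*B.1*C.2*D.2 + A.2*C.2*D.1*E.1 + A.2*C.1*D.2*E.1 - 2*A.2*C.1*D.1*E.2 + A.2*B.2*D.1*E.1 - A.2*B.2*C.1*E.1 - 2*A.2*B.1*D.2*E.1 + A.2*B.1*D.1*E.2 - A.2*B.1*C.2*E.1 + 2*A.2*B.1*C.1*E.2 + A.2*B.1*B.2*E.1 - A.2*B.1*B.2*D.1 - A.2*B.1*B.1*E.2 + A.2*B.1*B.1*D.2 - A.2*A.2*D.1*E.1 + A.2*A.2*C.1*D.1 + A.2*A.2*B.1*E.1 - A.2*A.2*B.1*C.1 - 2*A.1*C.2*D.2*E.1 + A.1*C.2*D.1*E.2 + A.1*C.1*D.2*E.2 + A.1*B.2*D.2*E.1 - 2*A.1*B.2*D.1*E.2 + 2*A.1*B.2*C.2*E.1 - A.1*B.2*C.1*E.2 - A.1*B.2*B.2*E.1 + A.1*B.2*B.2*D.1 + A.1*B.1*D.2*E.2 - A.1*B.1*C.2*E.2 + A.1*B.1*B.2*E.2 - A.1*B.1*B.2*D.2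 + A.1*A.2*D.2*E.1 + A.1*A.2*D.1*E.2 - A.1*A.2*C.2*D.1 - A.1*A.2*C.1*D.2 - A.1*A.2*B.2*E.1 + A.1*A.2*B.2*C.1 - A.1*A.2*B.1*E.2 + A.1*A.2*B.1*C.2 - A.1*A.1*D.2*E.2 + A.1*A.1*C.2*D.2 + A.1*A.1*B.2*E.2 - A.1*A.1*B.2*C.2) * h2
    · have h3 := line_cross_of_mem A C E hm1
      have h4 := line_cross_of_mem B D E hm2
      simp only [npc, Conic.eval]
      linear_combination (-B.2*D.1*D.2*E.1 + B.2*D.1*D.1*E.2 + 2*B.2*C.2*D.1*E.1 - B.2*C.2*D.1*D.1 - B.2*C.1*D.2*E.1 - B.2*C.1*D.1*E.2 + B.2*C.1*D.1*D.2 - B.2*B.2*D.1*E.1 + B.2*B.2*C.1*E.1 + B.1*D.2*D.2*E.1 - B.1*D.1*D.2*E.2 - B.1*C.2*D.2*E.1 - B.1*C.2*D.1*E.2 + B.1*C.2*D.1*D.2 + 2*B.1*C.1*D.2*E.2 - B.1*C.1*D.2*D.2 + B.1*B.2*D.2*E.1 + B.1*B.2*D.1*E.2 - B.1*B.2*C.2*E.1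 - B.1*B.2*C.1*E.2 - B.1*B.1*D.2*E.2 + B.1*B.1*C.2*E.2 + A.2*D.1*D.2*E.1 - A.2*D.1*D.1*E.2 - 2*A.2*C.2*D.1*E.1 + A.2*C.2*D.1*D.1 + A.2*C.1*D.2*E.1 + A.2*C.1*D.1*E.2 - A.2*C.1*D.1*D.2 + A.2*B.2*D.1*E.1 - A.2*B.2*C.1*E.1 - 2*A.2*B.1*D.2*E.1 + A.2*B.1*D.1*E.2 + 2*A.2*B.1*C.2*E.1 - A.2*B.1*C.1*E.2 - A.2*B.1*B.2*D.1 + A.2*B.1*B.2*C.1 + A.2*B.1*B.1*D.2 - A.2*B.1*B.1*C.2 - A.1*D.2*D.2*E.1 + A.1*D.1*D.2*E.2 + A.1*C.2*D.2*E.1 + A.1*C.2*D.1*E.2 - A.1*C.2*D.1*D.2 - 2*A.1*C.1*D.2*E.2 + A.1*C.1*D.2*D.2 + A.1*B.2*D.2*E.1 - 2*A.1*B.2*D.1*E.2 - A.1*B.2*C.2*E.1 + 2*A.1*B.2*C.1*E.2 + A.1*B.2*B.2*D.1 - A.1*B.2*B.2*C.1 + A.1*B.1*D.2*E.2 - A.1*B.1*C.2*E.2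 - A.1*B.1*B.2*D.2 + A.1*B.1*B.2*C.2) * h3 + (B.2*C.2*D.1*E.1 - 2*B.2*C.1*D.2*E.1 + B.2*C.1*D.1*E.2 + B.2*C.1*C.2*E.1 - B.2*C.1*C.2*D.1 - B.2*C.1*C.1*E.2 + B.2*C.1*C.1*D.2 + B.1*C.2*D.2*E.1 - 2*B.1*C.2*D.1*E.2 - B.1*C.2*C.2*E.1 + B.1*C.2*C.2*D.1 + B.1*C.1*D.2*E.2 + B.1*C.1*C.2*E.2 - B.1*C.1*C.2*D.2 - A.2*C.2*D.1*E.1 + 2*A.2*C.1*D.2*E.1 - A.2*C.1*D.1*E.2 - A.2*C.1*C.2*E.1 + A.2*C.1*C.2*D.1 + A.2*C.1*C.1*E.2 - A.2*C.1*C.1*D.2 - A.2*B.2*D.1*E.1 + A.2*B.2*C.1*E.1 - A.2*B.1*D.2*E.1 + 2*A.2*B.1*D.1*E.2 + A.2*B.1*C.2*E.1 - 2*A.2*B.1*C.1*E.2 + A.2*A.2*D.1*E.1 - A.2*A.2*C.1*E.1 - A.2*A.2*B.1*D.1 + A.2*A.2*B.1*C.1 - A.1*C.2*D.2*E.1 +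 2*A.1*C.2*D.1*E.2 + A.1*C.2*C.2*E.1 - A.1*C.2*C.2*D.1 - A.1*C.1*D.2*E.2 - A.1*C.1*C.2*E.2 + A.1*C.1*C.2*D.2 + 2*A.1*B.2*D.2*E.1 - A.1*B.2*D.1*E.2 - 2*A.1*B.2*C.2*E.1 + A.1*B.2*C.1*E.2 - A.1*B.1*D.2*E.2 + A.1*B.1*C.2*E.2 - A.1*A.2*D.2*E.1 - A.1*A.2*D.1*E.2 + A.1*A.2*C.2*E.1 + A.1*A.2*C.1*E.2 + A.1*A.2*B.2*D.1 - A.1*A.2*B.2*C.1 + A.1*A.2*B.1*D.2 - A.1*A.2*B.1*C.2 + A.1*A.1*D.2*E.2 - A.1*A.1*C.2*E.2 - A.1*A.1*B.2*D.2 + A.1*A.1*B.2*C.2) * h4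
    · have h5 := line_cross_of_mem A D E hm1
      have h6 := line_cross_of_mem B C E hm2
      simp only [npc, Conic.eval]
      linear_combination (B.2*C.2*D.1*E.1 - 2*B.2*C.1*D.2*E.1 + B.2*C.1*D.1*E.2 + B.2*C.1*C.2*E.1 - B.2*C.1*C.2*D.1 - B.2*C.1*C.1*E.2 + B.2*C.1*C.1*D.2 - B.2*B.2*D.1*E.1 + B.2*B.2*C.1*E.1 + B.1*C.2*D.2*E.1 - 2*B.1*C.2*D.1*E.2 - B.1*C.2*C.2*E.1 + B.1*C.2*C.2*D.1 + B.1*C.1*D.2*E.2 + B.1*C.1*C.2*E.2 - B.1*C.1*C.2*D.2 + B.1*B.2*D.2*E.1 + B.1*B.2*D.1*E.2 - B.1*B.2*C.2*E.1 - B.1*B.2*C.1*E.2 - B.1*B.1*D.2*E.2 + B.1*B.1*C.2*E.2 - A.2*C.2*D.1*E.1 + 2*A.2*C.1*D.2*E.1 - A.2*C.1*D.1*E.2 - A.2*C.1*C.2*E.1 + A.2*C.1*C.2*D.1 + A.2*C.1*C.1*E.2 - A.2*C.1*C.1*D.2 + A.2*B.2*D.1*E.1 - A.2*B.2*C.1*E.1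 - 2*A.2*B.1*D.2*E.1 + A.2*B.1*D.1*E.2 + 2*A.2*B.1*C.2*E.1 - A.2*B.1*C.1*E.2 - A.2*B.1*B.2*D.1 + A.2*B.1*B.2*C.1 + A.2*B.1*B.1*D.2 - A.2*B.1*B.1*C.2 - A.1*C.2*D.2*E.1 + 2*A.1*C.2*D.1*E.2 + A.1*C.2*C.2*E.1 - A.1*C.2*C.2*D.1 - A.1*C.1*D.2*E.2 - A.1*C.1*C.2*E.2 + A.1*C.1*C.2*D.2 + A.1*B.2*D.2*E.1 - 2*A.1*B.2*D.1*E.2 - A.1*B.2*C.2*E.1 + 2*A.1*B.2*C.1*E.2 + A.1*B.2*B.2*D.1 - A.1*B.2*B.2*C.1 + A.1*B.1*D.2*E.2 - A.1*B.1*C.2*E.2 - A.1*B.1*B.2*D.2 + A.1*B.1*B.2*C.2) * h5 + (-B.2*D.1*D.2*E.1 + B.2*D.1*D.1*E.2 + 2*B.2*C.2*D.1*E.1 - B.2*C.2*D.1*D.1 - B.2*C.1*D.2*E.1 - B.2*C.1*D.1*E.2 + B.2*C.1*D.1*D.2 + B.1*D.2*D.2*E.1 - B.1*D.1*D.2*E.2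 - B.1*C.2*D.2*E.1 - B.1*C.2*D.1*E.2 + B.1*C.2*D.1*D.2 + 2*B.1*C.1*D.2*E.2 - B.1*C.1*D.2*D.2 + A.2*D.1*D.2*E.1 - A.2*D.1*D.1*E.2 - 2*A.2*C.2*D.1*E.1 + A.2*C.2*D.1*D.1 + A.2*C.1*D.2*E.1 + A.2*C.1*D.1*E.2 - A.2*C.1*D.1*D.2 - A.2*B.2*D.1*E.1 + A.2*B.2*C.1*E.1 - A.2*B.1*D.2*E.1 + 2*A.2*B.1*D.1*E.2 + A.2*B.1*C.2*E.1 - 2*A.2*B.1*C.1*E.2 + A.2*A.2*D.1*E.1 - A.2*A.2*C.1*E.1 - A.2*A.2*B.1*D.1 + A.2*A.2*B.1*C.1 - A.1*D.2*D.2*E.1 + A.1*D.1*D.2*E.2 + A.1*C.2*D.2*E.1 + A.1*C.2*D.1*E.2 - A.1*C.2*D.1*D.2 - 2*A.1*C.1*D.2*E.2 + A.1*C.1*D.2*D.2 + 2*A.1*B.2*D.2*E.1 - A.1*B.2*D.1*E.2 - 2*A.1*B.2*C.2*E.1 + A.1*B.2*C.1*E.2 - A.1*B.1*D.2*E.2 +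 A.1*B.1*C.2*E.2 - A.1*A.2*D.2*E.1 - A.1*A.2*D.1*E.2 + A.1*A.2*C.2*E.1 + A.1*A.2*C.1*E.2 + A.1*A.2*B.2*D.1 - A.1*A.2*B.2*C.1 + A.1*A.2*B.1*D.2 - A.1*A.2*B.1*C.2 + A.1*A.1*D.2*E.2 - A.1*A.1*C.2*E.2 - A.1*A.1*B.2*D.2 + A.1*A.1*B.2*C.2) * h6
  · -- center
    have hA' : (A.1 - O.1) ^ 2 + (A.2 - O.2) ^ 2 = r ^ 2 := hA
    have hB' : (B.1 - O.1) ^ 2 + (B.2 - O.2) ^ 2 = r ^ 2 := hB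
    have hC' : (C.1 - O.1) ^ 2 + (C.2 - O.2) ^ 2 = r ^ 2 := hC
    have hD' : (D.1 - O.1) ^ 2 + (D.2 - O.2) ^ 2 = r ^ 2 := hD
    simp only [npc, Conic.eval]
    linear_combination ((C.2-O.2)*(C.2-O.2)*(D.1-O.1)*(D.2-O.2) - (C.1-O.1)*(C.2-O.2)*(D.2-O.2)*(D.2-O.2) - (B.2-O.2)*(B.2-O.2)*(D.1-O.1)*(D.2-O.2) + (B.2-O.2)*(B.2-O.2)*(C.1-O.1)*(C.2-O.2) + (B.1-O.1)*(B.2-O.2)*(D.2-O.2)*(D.2-O.2) - (B.1-O.1)*(B.2-O.2)*(C.2-O.2)*(C.2-O.2)) * hA' + (-(C.2-O.2)*(C.2-O.2)*(D.1-O.1)*(D.2-O.2) + (C.1-O.1)*(C.2-O.2)*(D.2-O.2)*(D.2-O.2) + (A.2-O.2)*(A.2-O.2)*(D.1-O.1)*(D.2-O.2) - (A.2-O.2)*(A.2-O.2)*(C.1-O.1)*(C.2-O.2) - (A.1-O.1)*(A.2-O.2)*(D.2-O.2)*(D.2-O.2) + (A.1-O.1)*(A.2-O.2)*(C.2-O.2)*(C.2-O.2))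 * hB' + ((B.2-O.2)*(B.2-O.2)*(D.1-O.1)*(D.2-O.2) - (B.1-O.1)*(B.2-O.2)*(D.2-O.2)*(D.2-O.2) - (A.2-O.2)*(A.2-O.2)*(D.1-O.1)*(D.2-O.2) + (A.2-O.2)*(A.2-O.2)*(B.1-O.1)*(B.2-O.2) + (A.1-O.1)*(A.2-O.2)*(D.2-O.2)*(D.2-O.2) - (A.1-O.1)*(A.2-O.2)*(B.2-O.2)*(B.2-O.2)) * hC' + (-(B.2-O.2)*(B.2-O.2)*(C.1-O.1)*(C.2-O.2) + (B.1-O.1)*(B.2-O.2)*(C.2-O.2)*(C.2-O.2) + (A.2-O.2)*(A.2-O.2)*(C.1-O.1)*(C.2-O.2) - (A.2-O.2)*(A.2-O.2)*(B.1-O.1)*(B.2-O.2) - (A.1-O.1)*(A.2-O.2)*(C.2-O.2)*(C.2-O.2) + (A.1-O.1)*(A.2-O.2)*(B.2-O.2)*(B.2-O.2)) * hD'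
end
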